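/- arXiv:1803.09322 — 3 statements merged into one kernel-verified Lean document; each statement's English description precedes it below -/
import Mathlib

section
/- Let A_1,…,A_n be finite multisets of elements of 𝒜 and A = A_1 ∪ ⋯ ∪ A_n their indexed multiset union. Then Σ_{ν mixing} κ_ν = − Σ_{ω ∈ P↗(A)} (−1)^{|ω|} κ_ω, where the left sum runs over all mixing set partitions ν of A and the right sum runs over all nested upward sequences of partitions ω whose first partition ν^1 is a mixing partition of A. -/
open Finset

/-! ### Algebras with two multiplications -/

/-- An algebra with two multiplications: an `R`-module `A` equipped with two `R`-bilinear,
commutative, associative multiplications `dot` and `star` sharing a common unit `one`. -/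
structure TwoMulAlg (R : Type*) (A : Type*) [CommRing R] [AddCommGroup A] [Module R A] where
  dot : A → A → A
  star : A → A → A
  one : A
  dot_comm : ∀ x y, dot x y = dot y x
  dot_assoc : ∀ x y z, dot (dot x y) z = dot x (dot y z)
  star_comm : ∀ x y, star x y = star y x
  star_assoc : ∀ x y z, star (star x y) z = star x (star y z)
  dot_one : ∀ x, dot x one = x
  star_one : ∀ x, star x one = x
  dot_add : ∀ x y z, dot (x + y) z = dot x z + dot y z
  star_add : ∀ x y z, star (x + y) z = star x z + star y z
  dot_smul : ∀ (r : R) (x y : A), dot (r • x) y = r • dot x y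
  star_smul : ∀ (r : R) (x y : A), star (r • x) y = r • star x y

namespace TwoMulAlg

variable {R : Type*} {A : Type*} [CommRing R] [AddCommGroup A] [Module R A]

/-- The `·`-product of the values of `f` over a finite set `s`. -/
def dotProd (T : TwoMulAlg R A) {ι : Type*} (s : Finset ι) (f : ι → A) : A :=
  @Finset.fold ι A T.dot ⟨T.dot_comm⟩ ⟨T.dot_assoc⟩ T.one f s

/-- The `∗`-product of the values of `f` over a finite set `s`. -/
def starProd (T : TwoMulAlg R A) {ι : Type*} (s : Finset ι) (f : ι → A) : A :=
  @Finset.fold ι A T.star ⟨T.star_comm⟩ ⟨T.star_assoc⟩ T.one f s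

/-- The same algebra with the roles of the two multiplications exchanged. -/
def swap (T : TwoMulAlg R A) : TwoMulAlg R A :=
  ⟨T.star, T.dot, T.one, T.star_comm, T.star_assoc, T.dot_comm, T.dot_assoc,
    T.star_one, T.dot_one, T.star_add, T.dot_add, T.star_smul, T.dot_smul⟩

end TwoMulAlg

/-- `k : Multiset A → A` is *the* family of cumulants of the identity map
`(A, ·) → (A, ∗)`: it is symmetric (being defined on multisets), satisfies `κ(a) = a`,
and the moment–cumulant formula: for every finite family `a : Fin m → A`, the `∗`-product
of the family equals the sum, over all set partitions `ν` of `{1, …, m}`, of the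
`·`-product over the blocks `b` of `ν` of the cumulants of the subfamilies. -/
def IsCumulant {R : Type*} {A : Type*} [CommRing R] [AddCommGroup A] [Module R A]
    (T : TwoMulAlg R A) (k : Multiset A → A) : Prop :=
  (∀ a : A, k {a} = a) ∧
  ∀ (m : ℕ) (a : Fin m → A),
    T.starProd Finset.univ a =
      ∑ᶠ ν : Finpartition (Finset.univ : Finset (Fin m)),
        T.dotProd ν.parts fun b => k (Multiset.map a b.val)

section Forests

variable {ι : Type*} [DecidableEq ι]

/-!  A reduced forest with set of leaves a finite (ground) set `b` is encoded by the family
`F` of the sets of leaves lying below its internal vertices: this family is *laminar*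
(any two members are nested or disjoint) and each member has at least two elements
(this corresponds to every internal vertex having at least two children).  The vertices of
the forest are identified with the corresponding sets of leaves: the singletons `{x}`, `x ∈ b`,
are the leaves and the members of `F` are the internal vertices. -/

/-- The vertices of the reduced forest `F` on the ground set `b`, viewed as subsets of `b`:
the singletons (leaves) together with the members of `F` (internal vertices). -/
def forestVerts (b : Finset ι) (F : Finset (Finset ι)) : Finset (Finset ι) :=
  F ∪ b.image fun x => ({x} : Finset ι)

/-- `F` encodes a reduced forest with leaves (bijectively labelled by) `b`:
each internal vertex covers at least two leaves, i.e. has at least two children. -/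
def IsReducedForest (b : Finset ι) (F : Finset (Finset ι)) : Prop :=
  (∀ s ∈ F, s ⊆ b ∧ 2 ≤ s.card) ∧
    ∀ s ∈ F, ∀ t ∈ F, s ⊆ t ∨ t ⊆ s ∨ Disjoint s t

/-- `t` is a child of `s` in the forest `F` on ground set `b`. -/
def IsChildV (b : Finset ι) (F : Finset (Finset ι)) (t s : Finset ι) : Prop :=
  t ∈ forestVerts b F ∧ s ∈ forestVerts b F ∧ t ⊂ s ∧
    ∀ u ∈ forestVerts b F, ¬(t ⊂ u ∧ u ⊂ s)

/-- The children of the vertex `s` in the forest `F` on ground set `b`. -/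
def childrenF (b : Finset ι) (F : Finset (Finset ι)) (s : Finset ι) : Finset (Finset ι) :=
  (forestVerts b F).filter fun t => t ⊂ s ∧ ∀ u ∈ forestVerts b F, ¬(t ⊂ u ∧ u ⊂ s)

/-- The roots (maximal vertices) of the forest `F` on ground set `b`. -/
def rootsF (b : Finset ι) (F : Finset (Finset ι)) : Finset (Finset ι) :=
  (forestVerts b F).filter fun s => ∀ u ∈ forestVerts b F, ¬s ⊂ u

/-- The forest `F` consists of a single tree. -/
def IsTreeF (b : Finset ι) (F : Finset (Finset ι)) : Prop :=
  b ∈ forestVerts b F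

/-- The number of internal vertices of the forest `F`. -/
def wForest (F : Finset (Finset ι)) : ℕ := F.card

/-- The height of the forest `F` on ground set `b` (the maximal distance from a root
to a leaf below it). -/
def forestHeight (b : Finset ι) (F : Finset (Finset ι)) : ℕ :=
  b.sup fun x => (F.filter fun s => x ∈ s).card

variable {A : Type*}

/-- The cumulant `κ_v` attached to a vertex `v` of the forest `F` (with leaves `b`
labelled by `a`): it is `a x` on a leaf `{x}` and `k` applied to the cumulants of the
children on an internal vertex. -/
noncomputable def kappaVert (k : Multiset A → A) (b : Finset ι) (F : Finset (Finset ι))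
    (a : ι → A) : Finset ι → A := fun s =>
  if h : s.card = 1 then a (Finset.card_eq_one.mp h).choose
  else k (Multiset.map (fun t => kappaVert k b F a t.1) (childrenF b F s).attach.val)
termination_by s => s.card
decreasing_by
  have ht := (Finset.mem_filter.mp t.2).2.1
  exact Finset.card_lt_card ht

end Forests

/-- The cumulant `κ_F` of the forest `F`: the `∗`-product of the cumulants of its roots. -/
noncomputable def kappaForest {R : Type*} {A : Type*} [CommRing R] [AddCommGroup A]
    [Module R A] {ι : Type*} [DecidableEq ι] (T : TwoMulAlg R A) (k : Multiset A → A)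
    (b : Finset ι) (F : Finset (Finset ι)) (a : ι → A) : A :=
  T.starProd (rootsF b F) (kappaVert k b F a)

section Mixing

variable {ι : Type*} [DecidableEq ι] {n : ℕ}

/-- The forest `F` is *mixing* for the division of its leaves given by `part`:
every internal vertex all of whose children are leaves has two children (leaves)
belonging to distinct multisets. -/
def IsMixingForest (b : Finset ι) (F : Finset (Finset ι)) (part : ι → Fin n) : Prop :=
  ∀ s ∈ F, (∀ t ∈ F, ¬t ⊂ s) → ∃ x ∈ s, ∃ y ∈ s, part x ≠ part y

/-- `lam` determines a *row partition* `{lam, b \ lam}` of the ground set `b` for the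
division given by `part`: both parts are nonempty and every fiber of `part` (i.e. every
multiset `A_i`) is contained in one of the two parts. -/
def IsRowSplit (b : Finset ι) (part : ι → Fin n) (lam : Finset ι) : Prop :=
  lam ⊆ b ∧ lam.Nonempty ∧ (b \ lam).Nonempty ∧
    ∀ i : Fin n, (b.filter fun x => part x = i) ⊆ lam ∨
      (b.filter fun x => part x = i) ⊆ b \ lam

/-- A set partition `ν` of `b` is *mixing* if some block is contained in no single
multiset `A_i`. -/
def IsMixingPartition (b : Finset ι) (ν : Finpartition b) (part : ι → Fin n) : Prop :=
  ∃ c ∈ ν.parts, ∀ i : Fin n, ¬c ⊆ b.filter fun x => part x = i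

/-- A set partition `ν` of `b` is *strongly mixing* if there is no row partition such that
every block of `ν` is contained in one of the two rows. -/
def IsStronglyMixingPartition (b : Finset ι) (ν : Finpartition b) (part : ι → Fin n) : Prop :=
  ¬∃ lam : Finset ι, IsRowSplit b part lam ∧
    ∀ c ∈ ν.parts, c ⊆ lam ∨ c ⊆ b \ lam

/-- A forest is *strongly mixing* if it is mixing and the partition of the leaves into the
leaf sets of its trees (i.e. of its roots) is strongly mixing. -/
def IsStronglyMixingForest (b : Finset ι) (F : Finset (Finset ι)) (part : ι → Fin n) : Prop :=
  IsMixingForest b F part ∧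
    ¬∃ lam : Finset ι, IsRowSplit b part lam ∧
      ∀ s ∈ rootsF b F, s ⊆ lam ∨ s ⊆ b \ lam

/-- `c` is a gap-free vertex colouring of length `r` of the forest `F` on ground set `b`:
each vertex gets a colour in `{0, …, r}`, each colour is used, each leaf is coloured `0`
and the colours strictly increase on any path from a leaf to a root.  (As a normalisation,
non-vertices get the colour `0`.) -/
def IsGapFreeColouring (b : Finset ι) (F : Finset (Finset ι)) (c : Finset ι → ℕ) (r : ℕ) :
    Prop :=
  (∀ s ∈ forestVerts b F, c s ≤ r) ∧
  (∀ j ≤ r, ∃ s ∈ forestVerts b F, c s = j) ∧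
  (∀ x ∈ b, c {x} = 0) ∧
  (∀ t s : Finset ι, IsChildV b F t s → c t < c s) ∧
  (∀ s : Finset ι, s ∉ forestVerts b F → c s = 0)

/-- A colouring is *weakly mixing* if either the colour `1` is not used at all, or some
vertex of colour `1` has two children which are leaves belonging to distinct multisets. -/
def IsWeaklyMixing (b : Finset ι) (F : Finset (Finset ι)) (part : ι → Fin n)
    (c : Finset ι → ℕ) : Prop :=
  (∀ s ∈ forestVerts b F, c s ≠ 1) ∨
    ∃ s ∈ forestVerts b F, c s = 1 ∧
      ∃ x y : ι, IsChildV b F {x} s ∧ IsChildV b F {y} s ∧ part x ≠ part y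

/-- The set `C_F` of gap-free, weakly mixing colourings of the forest `F` (a colouring is
recorded as a pair: the colour function together with its length). -/
def ColouringSet (b : Finset ι) (F : Finset (Finset ι)) (part : ι → Fin n) :
    Set ((Finset ι → ℕ) × ℕ) :=
  {p | IsGapFreeColouring b F p.1 p.2 ∧ IsWeaklyMixing b F part p.1}

/-- The signed count `Σ_{c ∈ C_F} (-1)^{|c|}` of the gap-free weakly mixing colourings
of the forest `F`. -/
noncomputable def colourSum (b : Finset ι) (F : Finset (Finset ι)) (part : ι → Fin n) : ℤ :=
  ∑ᶠ p ∈ ColouringSet b F part, (-1 : ℤ) ^ p.2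

/-- The projection of a colouring `c` onto the subtree of `F` with ground set `b`:
restrict `c` to the vertices and relabel the used colours order-preservingly by
`0, 1, 2, …`. -/
def projColouring (b : Finset ι) (F : Finset (Finset ι)) (c : Finset ι → ℕ) :
    (Finset ι → ℕ) × ℕ :=
  ((fun s => if s ∈ forestVerts b F then
      (((forestVerts b F).image c).sort (· ≤ ·)).idxOf (c s) else 0),
    ((forestVerts b F).image c).card - 1)

end Mixing

section UpSeq

variable {ι : Type*} [DecidableEq ι] {b : Finset ι} {A : Type*} {n : ℕ}

/-- The value attached to a block `c` of the top partition of an upward sequence of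
partitions; the list records the earlier (finer) partitions, from the latest to the
earliest.  On the empty list (a block of the first partition) it is the cumulant of the
labels of the elements of the block; on `p :: rest` it is the cumulant of the values of
the blocks of `p` contained in `c`. -/
def levelVal (k : Multiset A → A) (a : ι → A) : List (Finpartition b) → Finset ι → A
  | [], c => k (Multiset.map a c.val)
  | p :: rest, c => k (Multiset.map (levelVal k a rest) (p.parts.filter fun d => d ⊆ c).val)

/-- The cumulant `κ_ω` of a (nonempty) upward sequence of partitions
`ω = [ν¹, …, νʳ]`: the `∗`-product over the blocks of `νʳ` of the iterated cumulants. -/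
def kappaUpSeq {R : Type*} [CommRing R] [AddCommGroup A] [Module R A] (T : TwoMulAlg R A)
    (k : Multiset A → A) (a : ι → A) (ω : List (Finpartition b)) : A :=
  match ω.reverse with
  | [] => T.one
  | p :: rest => T.starProd p.parts (levelVal k a rest)

/-- The set `P↗(A)` of nested upward sequences of partitions starting from a mixing
partition.  An upward sequence is encoded by the induced chain `ν¹ ≤ ν² ≤ ⋯` of
partitions of the ground set `b` (`≤` being the refinement order); nestedness means the
chain is strictly increasing. -/
def UpSeqSet (b : Finset ι) (part : ι → Fin n) : Set (List (Finpartition b)) :=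
  {ω | ω ≠ [] ∧ List.Chain' (· < ·) ω ∧ ∀ p ∈ ω.head?, IsMixingPartition b p part}

end UpSeq


/-! ### Auxiliary development for the proof of `stmt9` -/

namespace TwoMulAlg

variable {R : Type*} {A : Type*} [CommRing R] [AddCommGroup A] [Module R A]

theorem dotProd_congr (T : TwoMulAlg R A) {β : Type*} {s : Finset β} {f g : β → A}
    (h : ∀ x ∈ s, f x = g x) : T.dotProd s f = T.dotProd s g := by
  unfold dotProd; exact Finset.fold_congr (hc := ⟨T.dot_comm⟩) (ha := ⟨T.dot_assoc⟩) h

theorem starProd_congr (T : TwoMulAlg R A) {β : Type*} {s : Finset β} {f g : β → A}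
    (h : ∀ x ∈ s, f x = g x) : T.starProd s f = T.starProd s g := by
  unfold starProd; exact Finset.fold_congr (hc := ⟨T.star_comm⟩) (ha := ⟨T.star_assoc⟩) h

theorem dotProd_map (T : TwoMulAlg R A) {β γ : Type*} (s : Finset γ) (g : γ ↪ β) (f : β → A) :
    T.dotProd (s.map g) f = T.dotProd s (f ∘ g) := by
  unfold dotProd; exact Finset.fold_map (hc := ⟨T.dot_comm⟩) (ha := ⟨T.dot_assoc⟩)

theorem starProd_map (T : TwoMulAlg R A) {β γ : Type*} (s : Finset γ) (g : γ ↪ β) (f : β → A) :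
    T.starProd (s.map g) f = T.starProd s (f ∘ g) := by
  unfold starProd; exact Finset.fold_map (hc := ⟨T.star_comm⟩) (ha := ⟨T.star_assoc⟩)

theorem dotProd_image (T : TwoMulAlg R A) {β γ : Type*} [DecidableEq β] (s : Finset γ)
    (g : γ → β) (f : β → A) (H : ∀ x ∈ s, ∀ y ∈ s, g x = g y → x = y) :
    T.dotProd (s.image g) f = T.dotProd s (f ∘ g) := by
  unfold dotProd; exact Finset.fold_image (hc := ⟨T.dot_comm⟩) (ha := ⟨T.dot_assoc⟩) H


end TwoMulAlg

set_option linter.unusedSectionVars false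

namespace CumulantAux

variable {ι : Type*} [Fintype ι] [DecidableEq ι] {m : ℕ}

theorem eq_of_mem_g (p : Finpartition (Finset.univ : Finset ι)) (g : Fin m → Finset ι)
    (hg1 : ∀ i, g i ∈ p.parts) (hginj : Function.Injective g)
    {i j : Fin m} {x : ι} (hx : x ∈ g i) (hy : x ∈ g j) : i = j :=
  hginj (p.eq_of_mem_parts (hg1 i) (hg1 j) hx hy)

theorem filter_subset_sup (p : Finpartition (Finset.univ : Finset ι)) (g : Fin m → Finset ι)
    (hg1 : ∀ i, g i ∈ p.parts) (t : Finset (Fin m)) :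
    p.parts.filter (fun c => c ⊆ t.sup g) = t.image g := by
  ext c
  simp only [Finset.mem_filter, Finset.mem_image]
  constructor
  · rintro ⟨hc, hsub⟩
    obtain ⟨x, hx⟩ := p.nonempty_of_mem_parts hc
    obtain ⟨j, hj, hxj⟩ := Finset.mem_sup.mp (hsub hx)
    exact ⟨j, hj, p.eq_of_mem_parts (hg1 j) hc hxj hx⟩
  · rintro ⟨i, hi, rfl⟩
    exact ⟨hg1 i, Finset.le_sup (f := g) hi⟩

theorem fiber_sup (p : Finpartition (Finset.univ : Finset ι)) (g : Fin m → Finset ι)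
    (hg1 : ∀ i, g i ∈ p.parts) (hginj : Function.Injective g) (t : Finset (Fin m)) :
    Finset.univ.filter (fun i => g i ⊆ t.sup g) = t := by
  ext i
  simp only [Finset.mem_filter, Finset.mem_univ, true_and]
  constructor
  · intro hsub
    have h1 : g i ∈ t.image g := by
      rw [← filter_subset_sup p g hg1 t]
      exact Finset.mem_filter.mpr ⟨hg1 i, hsub⟩
    obtain ⟨j, hj, hji⟩ := Finset.mem_image.mp h1
    rwa [← hginj hji]
  · intro hi; exact Finset.le_sup (f := g) hi

theorem sup_g_injective (p : Finpartition (Finset.univ : Finset ι)) (g : Fin m → Finset ι)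
    (hg1 : ∀ i, g i ∈ p.parts) (hginj : Function.Injective g) :
    Function.Injective (fun t : Finset (Fin m) => t.sup g) := by
  intro t t' h
  have h' : t.sup g = t'.sup g := h
  have h2 : Finset.univ.filter (fun i => g i ⊆ t.sup g)
      = Finset.univ.filter (fun i => g i ⊆ t'.sup g) := by rw [h']
  rwa [fiber_sup p g hg1 hginj t, fiber_sup p g hg1 hginj t'] at h2

/-- Coarsening of `p` along a partition of the index set. -/
def coarsen (p : Finpartition (Finset.univ : Finset ι)) (g : Fin m → Finset ι)
    (hg1 : ∀ i, g i ∈ p.parts) (hg2 : ∀ c ∈ p.parts, ∃ i, g i = c)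
    (hginj : Function.Injective g) (μ : Finpartition (Finset.univ : Finset (Fin m))) :
    Finpartition (Finset.univ : Finset ι) where
  parts := μ.parts.image fun t => t.sup g
  supIndep := by
    rw [Finset.supIndep_iff_pairwiseDisjoint]
    rintro d hd d' hd' hne
    rw [Finset.mem_coe, Finset.mem_image] at hd hd'
    obtain ⟨t, ht, rfl⟩ := hd
    obtain ⟨t', ht', rfl⟩ := hd'
    have htt' : t ≠ t' := fun h => hne (by rw [h])
    have hdisj : Disjoint t t' := μ.disjoint ht ht' htt'
    simp only [Function.onFun, id_eq]
    rw [Finset.disjoint_left]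
    intro x hx hx'
    obtain ⟨i, hi, hxi⟩ := Finset.mem_sup.mp hx
    obtain ⟨j, hj, hxj⟩ := Finset.mem_sup.mp hx'
    have hij : i = j := eq_of_mem_g p g hg1 hginj hxi hxj
    subst hij
    exact Finset.disjoint_left.mp hdisj hi hj
  sup_parts := by
    rw [Finset.eq_univ_iff_forall]
    intro x
    have hx : x ∈ p.parts.sup id := by rw [p.sup_parts]; exact Finset.mem_univ x
    obtain ⟨c, hc, hxc⟩ := Finset.mem_sup.mp hx
    obtain ⟨i, rfl⟩ := hg2 c hc
    have hi : i ∈ μ.parts.sup id := by rw [μ.sup_parts]; exact Finset.mem_univ i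
    obtain ⟨t, ht, hit⟩ := Finset.mem_sup.mp hi
    exact Finset.mem_sup.mpr
      ⟨t.sup g, Finset.mem_image_of_mem _ ht, Finset.mem_sup.mpr ⟨i, hit, hxc⟩⟩
  bot_notMem := by
    intro h
    obtain ⟨t, ht, hsup⟩ := Finset.mem_image.mp h
    obtain ⟨i, hi⟩ := μ.nonempty_of_mem_parts ht
    obtain ⟨x, hx⟩ := p.nonempty_of_mem_parts (hg1 i)
    have hmem : x ∈ t.sup g := Finset.mem_sup.mpr ⟨i, hi, hx⟩
    rw [hsup] at hmem
    simp at hmem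

theorem le_coarsen (p : Finpartition (Finset.univ : Finset ι)) (g : Fin m → Finset ι)
    (hg1 : ∀ i, g i ∈ p.parts) (hg2 : ∀ c ∈ p.parts, ∃ i, g i = c)
    (hginj : Function.Injective g) (μ : Finpartition (Finset.univ : Finset (Fin m))) :
    p ≤ coarsen p g hg1 hg2 hginj μ := by
  intro c hc
  obtain ⟨i, rfl⟩ := hg2 c hc
  have hi : i ∈ μ.parts.sup id := by rw [μ.sup_parts]; exact Finset.mem_univ i
  obtain ⟨t, ht, hit⟩ := Finset.mem_sup.mp hi
  exact ⟨t.sup g, Finset.mem_image_of_mem _ ht, Finset.le_sup (f := g) hit⟩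

theorem coarsen_parts (p : Finpartition (Finset.univ : Finset ι)) (g : Fin m → Finset ι)
    (hg1 : ∀ i, g i ∈ p.parts) (hg2 : ∀ c ∈ p.parts, ∃ i, g i = c)
    (hginj : Function.Injective g) (μ : Finpartition (Finset.univ : Finset (Fin m))) :
    (coarsen p g hg1 hg2 hginj μ).parts = μ.parts.image fun t => t.sup g := rfl

theorem coarsen_injective (p : Finpartition (Finset.univ : Finset ι)) (g : Fin m → Finset ι)
    (hg1 : ∀ i, g i ∈ p.parts) (hg2 : ∀ c ∈ p.parts, ∃ i, g i = c)
    (hginj : Function.Injective g) :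
    Function.Injective (coarsen p g hg1 hg2 hginj) := by
  intro μ μ' h
  have hparts := congrArg Finpartition.parts h
  rw [coarsen_parts, coarsen_parts] at hparts
  have h2 := Finset.image_injective (sup_g_injective p g hg1 hginj) hparts
  exact Finpartition.ext h2

theorem coarsen_surj (p : Finpartition (Finset.univ : Finset ι)) (g : Fin m → Finset ι)
    (hg1 : ∀ i, g i ∈ p.parts) (hg2 : ∀ c ∈ p.parts, ∃ i, g i = c)
    (hginj : Function.Injective g) {σ : Finpartition (Finset.univ : Finset ι)} (hσ : p ≤ σ) :
    ∃ μ, coarsen p g hg1 hg2 hginj μ = σ := by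
  classical
  set F : Finset ι → Finset (Fin m) := fun d => Finset.univ.filter fun i => g i ⊆ d with hF
  have hsupF : ∀ d ∈ σ.parts, (F d).sup g = d := by
    intro d hd
    apply Finset.Subset.antisymm
    · exact Finset.sup_le (f := g) (a := d) fun i hi => (Finset.mem_filter.mp hi).2
    · intro x hxd
      have hx : x ∈ p.parts.sup id := by rw [p.sup_parts]; exact Finset.mem_univ x
      obtain ⟨c, hc, hxc⟩ := Finset.mem_sup.mp hx
      obtain ⟨d', hd', hcd'⟩ := hσ hc
      have hdd' : d = d' := σ.eq_of_mem_parts hd hd' hxd (hcd' hxc)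
      subst hdd'
      obtain ⟨i, rfl⟩ := hg2 c hc
      exact Finset.mem_sup.mpr ⟨i, Finset.mem_filter.mpr ⟨Finset.mem_univ i, hcd'⟩, hxc⟩
  have hFmem : ∀ d ∈ σ.parts, ∀ {x : ι}, x ∈ d → ∃ i ∈ F d, x ∈ g i := by
    intro d hd x hxd
    have hx : x ∈ p.parts.sup id := by rw [p.sup_parts]; exact Finset.mem_univ x
    obtain ⟨c, hc, hxc⟩ := Finset.mem_sup.mp hx
    obtain ⟨d', hd', hcd'⟩ := hσ hc
    have hdd' : d = d' := σ.eq_of_mem_parts hd hd' hxd (hcd' hxc)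
    subst hdd'
    obtain ⟨i, rfl⟩ := hg2 c hc
    exact ⟨i, Finset.mem_filter.mpr ⟨Finset.mem_univ i, hcd'⟩, hxc⟩
  have hFne : ∀ d ∈ σ.parts, (F d).Nonempty := by
    intro d hd
    obtain ⟨x, hx⟩ := σ.nonempty_of_mem_parts hd
    obtain ⟨i, hi, _⟩ := hFmem d hd hx
    exact ⟨i, hi⟩
  have hFdisj : ∀ d ∈ σ.parts, ∀ d' ∈ σ.parts, d ≠ d' → Disjoint (F d) (F d') := by
    intro d hd d' hd' hne
    rw [Finset.disjoint_left]
    intro i hi hi'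
    obtain ⟨x, hx⟩ := p.nonempty_of_mem_parts (hg1 i)
    exact hne (σ.eq_of_mem_parts hd hd'
      ((Finset.mem_filter.mp hi).2 hx) ((Finset.mem_filter.mp hi').2 hx))
  refine ⟨⟨σ.parts.image F, ?_, ?_, ?_⟩, ?_⟩
  · rw [Finset.supIndep_iff_pairwiseDisjoint]
    rintro t ht t' ht' hne
    rw [Finset.mem_coe, Finset.mem_image] at ht ht'
    obtain ⟨d, hd, rfl⟩ := ht
    obtain ⟨d', hd', rfl⟩ := ht'
    have hdd' : d ≠ d' := fun h => hne (by rw [h])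
    simpa only [Function.onFun, id_eq] using hFdisj d hd d' hd' hdd'
  · rw [Finset.eq_univ_iff_forall]
    intro i
    have hgi : g i ∈ p.parts := hg1 i
    obtain ⟨d, hd, hgd⟩ := hσ hgi
    exact Finset.mem_sup.mpr
      ⟨F d, Finset.mem_image_of_mem _ hd, Finset.mem_filter.mpr ⟨Finset.mem_univ i, hgd⟩⟩
  · intro h
    obtain ⟨d, hd, hFd⟩ := Finset.mem_image.mp h
    obtain ⟨i, hi⟩ := hFne d hd
    rw [hFd] at hi
    simp at hi
  · apply Finpartition.ext
    rw [coarsen_parts]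
    show (σ.parts.image F).image (fun t => t.sup g) = σ.parts
    rw [Finset.image_image]
    have himg : σ.parts.image ((fun t => t.sup g) ∘ F) = σ.parts.image id :=
      Finset.image_congr (fun d hd => hsupF d hd)
    rw [himg, Finset.image_id]

end CumulantAux

namespace CumulantAux

variable {R : Type*} {A : Type*} [CommRing R] [AddCommGroup A] [Module R A]
variable {ι : Type*} [Fintype ι] [DecidableEq ι]

theorem MCset (T : TwoMulAlg R A) {k : Multiset A → A} (hk : IsCumulant T k)
    (p : Finpartition (Finset.univ : Finset ι)) (f : Finset ι → A) :
    T.starProd p.parts f =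
      ∑ᶠ σ ∈ {σ : Finpartition (Finset.univ : Finset ι) | p ≤ σ},
        T.dotProd σ.parts
          (fun d => k (Multiset.map f (p.parts.filter (fun c => c ⊆ d)).val)) := by
  classical
  set m := p.parts.card with hm
  set e := p.parts.equivFin with he
  set g : Fin m → Finset ι := fun i => ((e.symm i : {x // x ∈ p.parts}) : Finset ι) with hgdef
  have hg1 : ∀ i, g i ∈ p.parts := fun i => (e.symm i).2
  have hg2 : ∀ c ∈ p.parts, ∃ i, g i = c := fun c hc => ⟨e ⟨c, hc⟩, by simp [hgdef]⟩
  have hginj : Function.Injective g := fun i j h => e.symm.injective (Subtype.ext h)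
  have hmap : (Finset.univ : Finset (Fin m)).map ⟨g, hginj⟩ = p.parts := by
    ext c
    simp only [Finset.mem_map, Finset.mem_univ, true_and, Function.Embedding.coeFn_mk]
    exact ⟨fun ⟨i, hi⟩ => hi ▸ hg1 i, fun hc => hg2 c hc⟩
  have hL : T.starProd p.parts f = T.starProd Finset.univ (fun i => f (g i)) := by
    rw [← hmap, T.starProd_map]; rfl
  rw [hL, hk.2 m (fun i => f (g i)), ← finsum_mem_univ]
  apply finsum_mem_eq_of_bijOn (coarsen p g hg1 hg2 hginj)
  · refine ⟨fun μ _ => le_coarsen p g hg1 hg2 hginj μ, ?_, ?_⟩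
    · exact (coarsen_injective p g hg1 hg2 hginj).injOn
    · intro σ hσ
      obtain ⟨μ, hμ⟩ := coarsen_surj p g hg1 hg2 hginj hσ
      exact ⟨μ, Set.mem_univ μ, hμ⟩
  · intro μ _
    rw [coarsen_parts, T.dotProd_image _ _ _
      (fun t ht t' ht' h => sup_g_injective p g hg1 hginj h)]
    apply T.dotProd_congr
    intro t ht
    show k (Multiset.map (fun i => f (g i)) t.val)
      = k (Multiset.map f (p.parts.filter (fun c => c ⊆ t.sup g)).val)
    rw [filter_subset_sup p g hg1 t, Finset.image_val_of_injOn hginj.injOn, Multiset.map_map]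
    rfl

end CumulantAux

namespace CumulantAux

variable {R : Type*} {A : Type*} [CommRing R] [AddCommGroup A] [Module R A]
variable {ι : Type*} [Fintype ι] [DecidableEq ι]

def DV (T : TwoMulAlg R A) (k : Multiset A → A) (a : ι → A) :
    List (Finpartition (Finset.univ : Finset ι)) → A
  | [] => T.one
  | p :: rest => T.dotProd p.parts (levelVal k a rest)

def SV (T : TwoMulAlg R A) (k : Multiset A → A) (a : ι → A) :
    List (Finpartition (Finset.univ : Finset ι)) → A
  | [] => T.one
  | p :: rest => T.starProd p.parts (levelVal k a rest)

theorem kappaUpSeq_eq_SV (T : TwoMulAlg R A) (k : Multiset A → A) (a : ι → A)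
    (ω : List (Finpartition (Finset.univ : Finset ι))) :
    kappaUpSeq T k a ω = SV T k a ω.reverse := by
  cases h : ω.reverse with
  | nil => simp [kappaUpSeq, SV, h]
  | cons p rest => simp [kappaUpSeq, SV, h]

theorem levelVal_self {k : Multiset A → A} (hk1 : ∀ x : A, k {x} = x) (a : ι → A)
    (p : Finpartition (Finset.univ : Finset ι))
    (rest : List (Finpartition (Finset.univ : Finset ι)))
    {d : Finset ι} (hd : d ∈ p.parts) :
    levelVal k a (p :: rest) d = levelVal k a rest d := by
  have hfil : p.parts.filter (fun c => c ⊆ d) = {d} := by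
    ext c
    simp only [Finset.mem_filter, Finset.mem_singleton]
    constructor
    · rintro ⟨hc, hcd⟩
      obtain ⟨x, hx⟩ := p.nonempty_of_mem_parts hc
      exact p.eq_of_mem_parts hc hd hx (hcd hx)
    · rintro rfl; exact ⟨hd, Finset.Subset.refl _⟩
  show k (Multiset.map (levelVal k a rest) (p.parts.filter (fun c => c ⊆ d)).val)
    = levelVal k a rest d
  rw [hfil, Finset.singleton_val, Multiset.map_singleton, hk1]

theorem rec_step (T : TwoMulAlg R A) {k : Multiset A → A} (hk : IsCumulant T k) (a : ι → A)
    (p : Finpartition (Finset.univ : Finset ι))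
    (rest : List (Finpartition (Finset.univ : Finset ι))) :
    SV T k a (p :: rest) = DV T k a (p :: rest)
      + ∑ᶠ σ ∈ {σ : Finpartition (Finset.univ : Finset ι) | p < σ},
          DV T k a (σ :: p :: rest) := by
  have h := MCset T hk p (levelVal k a rest)
  have hset : {σ : Finpartition (Finset.univ : Finset ι) | p ≤ σ}
      = insert p {σ : Finpartition (Finset.univ : Finset ι) | p < σ} := by
    ext σ
    simp only [Set.mem_setOf_eq, Set.mem_insert_iff]
    constructor
    · intro hle
      rcases eq_or_lt_of_le hle with h1 | h1
      · exact Or.inl h1.symm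
      · exact Or.inr h1
    · rintro (rfl | hlt)
      · exact le_rfl
      · exact le_of_lt hlt
  have hnm : p ∉ {σ : Finpartition (Finset.univ : Finset ι) | p < σ} := by simp
  rw [hset, finsum_mem_insert (fun σ : Finpartition (Finset.univ : Finset ι) =>
      T.dotProd σ.parts fun d =>
        k (Multiset.map (levelVal k a rest) (p.parts.filter (fun c => c ⊆ d)).val))
    hnm (Set.toFinite _)] at h
  show T.starProd p.parts (levelVal k a rest) = _
  rw [h]
  congr 1
  show T.dotProd p.parts (levelVal k a (p :: rest)) = T.dotProd p.parts (levelVal k a rest)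
  exact T.dotProd_congr (fun d hd => levelVal_self hk.1 a p rest hd)

def chainSet (p : Finpartition (Finset.univ : Finset ι)) :
    Set (List (Finpartition (Finset.univ : Finset ι))) :=
  {l | List.Chain' (· > ·) (l ++ [p])}

theorem nil_mem_chainSet (p : Finpartition (Finset.univ : Finset ι)) : [] ∈ chainSet p :=
  List.isChain_singleton p

theorem chainSet_finite (p : Finpartition (Finset.univ : Finset ι)) :
    (chainSet p).Finite := by
  apply Set.Finite.subset (List.finite_length_le (Finpartition (Finset.univ : Finset ι))
    (Fintype.card (Finpartition (Finset.univ : Finset ι))))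
  intro l hl
  have hc : (l ++ [p]).Chain' (· > ·) := hl
  have hnd : (l ++ [p]).Nodup := (List.isChain_iff_pairwise.mp hc).nodup
  have hlen := hnd.length_le_card
  simp only [List.length_append, List.length_singleton] at hlen
  simp only [Set.mem_setOf_eq]
  omega

theorem chainSet_diff_eq (p : Finpartition (Finset.univ : Finset ι)) :
    chainSet p \ {[]} =
      ⋃ σ ∈ {σ : Finpartition (Finset.univ : Finset ι) | p < σ},
        (fun l => l ++ [σ]) '' chainSet σ := by
  ext l
  simp only [Set.mem_diff, Set.mem_singleton_iff, Set.mem_iUnion, Set.mem_image,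
    Set.mem_setOf_eq, chainSet]
  constructor
  · rintro ⟨hl, hne⟩
    have hl' : List.Chain' (· > ·) ((l.dropLast ++ [l.getLast hne]) ++ [p]) := by
      rw [List.dropLast_append_getLast hne]; exact hl
    obtain ⟨h1, _, h3⟩ := List.isChain_append.mp hl'
    have hlast : (l.dropLast ++ [l.getLast hne]).getLast? = some (l.getLast hne) :=
      List.getLast?_concat
    have hgt : p < l.getLast hne := h3 _ hlast p rfl
    exact ⟨l.getLast hne, hgt, l.dropLast, h1, List.dropLast_append_getLast hne⟩
  · rintro ⟨σ, hσ, l', hl', rfl⟩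
    refine ⟨?_, by simp⟩
    apply List.isChain_append.mpr
    refine ⟨hl', List.isChain_singleton p, ?_⟩
    intro x hx y hy
    have hx' : x = σ := by
      rw [List.getLast?_concat] at hx
      exact (Option.mem_some_iff.mp hx).symm
    have hy' : y = p := (Option.mem_some_iff.mp hy).symm
    rw [hx', hy']
    exact hσ

end CumulantAux

namespace CumulantAux

variable {R : Type*} {A : Type*} [CommRing R] [AddCommGroup A] [Module R A]
variable {ι : Type*} [Fintype ι] [DecidableEq ι]

theorem sign_succ_smul (n : ℕ) (x : A) :
    ((-1 : ℤ) ^ (n + 1)) • x = -(((-1 : ℤ) ^ n) • x) := by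
  rw [pow_succ, mul_smul, neg_one_smul, smul_neg]

theorem key (T : TwoMulAlg R A) {k : Multiset A → A} (hk : IsCumulant T k) (a : ι → A) :
    ∀ (N : ℕ) (p : Finpartition (Finset.univ : Finset ι)),
      ({σ : Finpartition (Finset.univ : Finset ι) | p < σ}).ncard < N →
      ∀ rest, DV T k a (p :: rest)
        = ∑ᶠ l ∈ chainSet p, ((-1 : ℤ) ^ l.length) • SV T k a (l ++ p :: rest) := by
  intro N
  induction N with
  | zero => intro p h; exact absurd h (Nat.not_lt_zero _)
  | succ N ih =>
    intro p hp rest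
    have hrec := rec_step T hk a p rest
    have hIH : ∀ σ ∈ {σ : Finpartition (Finset.univ : Finset ι) | p < σ},
        DV T k a (σ :: p :: rest)
          = ∑ᶠ l ∈ chainSet σ, ((-1 : ℤ) ^ l.length) • SV T k a (l ++ σ :: p :: rest) := by
      intro σ hσ
      have hss : {τ : Finpartition (Finset.univ : Finset ι) | σ < τ}
          ⊂ {τ : Finpartition (Finset.univ : Finset ι) | p < τ} := by
        constructor
        · intro τ hτ
          exact lt_trans (show p < σ from hσ) (show σ < τ from hτ)
        · intro hsub
          have : σ < σ := hsub hσ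
          exact absurd this (lt_irrefl σ)
      have hcard := Set.ncard_lt_ncard hss (Set.toFinite _)
      exact ih σ (by omega) (p :: rest)
    rw [finsum_mem_congr rfl hIH] at hrec
    have hins : chainSet p = insert [] (chainSet p \ {[]}) := by
      rw [Set.insert_diff_singleton, Set.insert_eq_self.mpr (nil_mem_chainSet p)]
    set F : List (Finpartition (Finset.univ : Finset ι)) → A :=
      fun l => ((-1 : ℤ) ^ l.length) • SV T k a (l ++ p :: rest) with hF
    have hgoal : ∑ᶠ l ∈ chainSet p, F l = DV T k a (p :: rest) := by
      have hnm : ([] : List (Finpartition (Finset.univ : Finset ι))) ∉ chainSet p \ {[]} :=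
        fun hc => hc.2 rfl
      rw [hins, finsum_mem_insert F hnm ((chainSet_finite p).diff)]
      have hF0 : F [] = SV T k a (p :: rest) := by simp [hF]
      have hdisj : ({σ : Finpartition (Finset.univ : Finset ι) | p < σ}).PairwiseDisjoint
          (fun σ => (fun l => l ++ [σ]) '' chainSet σ) := by
        rintro σ _ σ' _ hne
        rw [Function.onFun, Set.disjoint_left]
        rintro x ⟨l, _, rfl⟩ ⟨l', _, heq⟩
        have := congrArg List.getLast? heq
        rw [List.getLast?_concat, List.getLast?_concat] at this
        exact hne (Option.some_injective _ this.symm)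
      rw [chainSet_diff_eq p,
        finsum_mem_biUnion hdisj (Set.toFinite _) (fun σ _ => (chainSet_finite σ).image _)]
      have hinner : ∀ σ ∈ {σ : Finpartition (Finset.univ : Finset ι) | p < σ},
          ∑ᶠ l ∈ (fun l => l ++ [σ]) '' chainSet σ, F l
            = -∑ᶠ l ∈ chainSet σ, ((-1 : ℤ) ^ l.length) • SV T k a (l ++ σ :: p :: rest) := by
        intro σ _
        have hinj : Set.InjOn (fun l => l ++ [σ]) (chainSet σ) := by
          intro l₁ _ l₂ _ h
          have := congrArg List.dropLast h
          rwa [List.dropLast_concat, List.dropLast_concat] at this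
        rw [finsum_mem_image hinj]
        rw [← finsum_mem_neg_distrib _ (chainSet_finite σ)]
        apply finsum_mem_congr rfl
        intro l _
        have hlen : (l ++ [σ]).length = l.length + 1 := by simp
        have happ : (l ++ [σ]) ++ p :: rest = l ++ σ :: p :: rest := by simp
        rw [hF]
        show ((-1 : ℤ) ^ (l ++ [σ]).length) • SV T k a ((l ++ [σ]) ++ p :: rest) = _
        rw [hlen, happ, sign_succ_smul]
      rw [finsum_mem_congr rfl hinner]
      rw [finsum_mem_neg_distrib _ (Set.toFinite _)]
      rw [hF0, hrec]
      abel
    exact hgoal.symm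

end CumulantAux

namespace CumulantAux

variable {R : Type*} {A : Type*} [CommRing R] [AddCommGroup A] [Module R A]
variable {ι : Type*} [Fintype ι] [DecidableEq ι] {n : ℕ}

theorem upSeqSet_eq (part : ι → Fin n) :
    UpSeqSet (Finset.univ : Finset ι) part =
      ⋃ ν ∈ {ν : Finpartition (Finset.univ : Finset ι) |
          IsMixingPartition Finset.univ ν part},
        (fun l => ν :: l.reverse) '' chainSet ν := by
  ext ω
  simp only [UpSeqSet, Set.mem_setOf_eq, Set.mem_iUnion, Set.mem_image, chainSet]
  constructor
  · rintro ⟨hne, hchain, hmix⟩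
    obtain ⟨ν, tl, rfl⟩ := List.exists_cons_of_ne_nil hne
    refine ⟨ν, hmix ν rfl, tl.reverse, ?_, by simp⟩
    show List.Chain' (· > ·) (tl.reverse ++ [ν])
    have h1 : (ν :: tl).reverse = tl.reverse ++ [ν] := by simp
    rw [← h1]
    exact List.isChain_reverse.mpr hchain
  · rintro ⟨ν, hν, l, hl, rfl⟩
    refine ⟨by simp, ?_, ?_⟩
    · have h2 : List.Chain' (· > ·) ((ν :: l.reverse).reverse) := by
        simpa using hl
      exact List.isChain_reverse.mp h2
    · intro q hq
      have : q = ν := (Option.mem_some_iff.mp hq).symm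
      rw [this]
      exact hν

theorem final (T : TwoMulAlg R A) {k : Multiset A → A} (hk : IsCumulant T k)
    (part : ι → Fin n) (a : ι → A) :
    ∑ᶠ ν ∈ {ν : Finpartition (Finset.univ : Finset ι) |
        IsMixingPartition Finset.univ ν part},
      T.dotProd ν.parts (fun c => k (Multiset.map a c.val)) =
    -∑ᶠ ω ∈ UpSeqSet Finset.univ part,
        ((-1 : ℤ) ^ ω.length) • kappaUpSeq T k a ω := by
  classical
  set Mix := {ν : Finpartition (Finset.univ : Finset ι) |
      IsMixingPartition Finset.univ ν part} with hMix
  have hLHS : ∀ ν ∈ Mix, T.dotProd ν.parts (fun c => k (Multiset.map a c.val))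
      = ∑ᶠ l ∈ chainSet ν, ((-1 : ℤ) ^ l.length) • SV T k a (l ++ [ν]) := by
    intro ν _
    have h0 : T.dotProd ν.parts (fun c => k (Multiset.map a c.val)) = DV T k a [ν] := by
      show _ = T.dotProd ν.parts (levelVal k a [])
      apply T.dotProd_congr
      intro c _
      simp [levelVal]
    rw [h0]
    exact key T hk a (({σ : Finpartition (Finset.univ : Finset ι) | ν < σ}).ncard + 1) ν
      (Nat.lt_succ_self _) []
  have hdisj : Mix.PairwiseDisjoint
      (fun ν => (fun l : List (Finpartition (Finset.univ : Finset ι)) => ν :: l.reverse)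
        '' chainSet ν) := by
    rintro ν _ ν' _ hne
    rw [Function.onFun, Set.disjoint_left]
    rintro x ⟨l, _, rfl⟩ ⟨l', _, heq⟩
    exact hne (List.cons.inj heq).1.symm
  have hR : ∑ᶠ ω ∈ UpSeqSet (Finset.univ : Finset ι) part,
      ((-1 : ℤ) ^ ω.length) • kappaUpSeq T k a ω
      = -∑ᶠ ν ∈ Mix, ∑ᶠ l ∈ chainSet ν, ((-1 : ℤ) ^ l.length) • SV T k a (l ++ [ν]) := by
    rw [upSeqSet_eq part, ← hMix,
      finsum_mem_biUnion hdisj (Set.toFinite _) (fun ν _ => (chainSet_finite ν).image _)]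
    rw [← finsum_mem_neg_distrib _ (Set.toFinite _)]
    apply finsum_mem_congr rfl
    intro ν _
    have hinj : Set.InjOn (fun l : List (Finpartition (Finset.univ : Finset ι)) =>
        ν :: l.reverse) (chainSet ν) := by
      intro l₁ _ l₂ _ h
      have h2 : l₁.reverse = l₂.reverse := (List.cons.inj h).2
      exact List.reverse_injective h2
    rw [finsum_mem_image hinj, ← finsum_mem_neg_distrib _ (chainSet_finite ν)]
    apply finsum_mem_congr rfl
    intro l _
    rw [kappaUpSeq_eq_SV]
    have h3 : (ν :: l.reverse).reverse = l ++ [ν] := by simp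
    have h4 : (ν :: l.reverse).length = l.length + 1 := by simp
    rw [h3, h4, sign_succ_smul]
  rw [finsum_mem_congr rfl hLHS, hR, neg_neg]

end CumulantAux


section Statements

variable {R : Type*} {A : Type*} [CommRing R] [AddCommGroup A] [Module R A]
variable {ι : Type*} [Fintype ι] [DecidableEq ι] {n : ℕ}

theorem stmt9 (T : TwoMulAlg R A) (k : Multiset A → A) (hk : IsCumulant T k)
    (part : ι → Fin n) (a : ι → A) :
    ∑ᶠ ν ∈ {ν : Finpartition (Finset.univ : Finset ι) |
        IsMixingPartition Finset.univ ν part},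
      T.dotProd ν.parts (fun c => k (Multiset.map a c.val)) =
    -∑ᶠ ω ∈ UpSeqSet Finset.univ part,
        ((-1 : ℤ) ^ ω.length) • kappaUpSeq T k a ω := by
  exact CumulantAux.final T hk part a

end Statements
end

section
/- Let A_1,…,A_n be finite multisets of elements of 𝒜 and A = A_1 ∪ ⋯ ∪ A_n their indexed multiset union. There exists a bijection Φ : ω ↦ (Φ_1(ω), Φ_2(ω)) between the set P↗(A) of nested upward sequences of partitions starting with a mixing partition of A and the set of pairs (F, c) where F is a reduced forest with leaves in A and c ∈ C_F is a gap-free weakly-mixing colouring of F of length |c| ≥ 1, such that for every ω ∈ P↗(A): κ_ω = κ_{Φ_1(ω)} and |ω| = |Φ_2(ω)|. -/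
open Finset

section Stmt10Aux



variable {ι : Type*} [DecidableEq ι]

/-- Membership in `forestVerts`. -/
lemma mem_forestVerts {b : Finset ι} {F : Finset (Finset ι)} {s : Finset ι} :
    s ∈ forestVerts b F ↔ s ∈ F ∨ ∃ x ∈ b, s = ({x} : Finset ι) := by
  simp [forestVerts, eq_comm]

lemma singleton_mem_forestVerts {b : Finset ι} {F : Finset (Finset ι)} {x : ι} (hx : x ∈ b) :
    ({x} : Finset ι) ∈ forestVerts b F :=
  mem_forestVerts.mpr (Or.inr ⟨x, hx, rfl⟩)

lemma vert_nonempty {b : Finset ι} {F : Finset (Finset ι)}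
    (hF : ∀ s ∈ F, 2 ≤ s.card) {s : Finset ι} (hs : s ∈ forestVerts b F) : s.Nonempty := by
  rcases mem_forestVerts.mp hs with h | ⟨x, _, rfl⟩
  · exact card_pos.mp (by have := hF s h; omega)
  · exact ⟨x, mem_singleton_self x⟩

lemma vert_subset {b : Finset ι} {F : Finset (Finset ι)}
    (hF : ∀ s ∈ F, s ⊆ b) {s : Finset ι} (hs : s ∈ forestVerts b F) : s ⊆ b := by
  rcases mem_forestVerts.mp hs with h | ⟨x, hx, rfl⟩
  · exact hF s h
  · exact singleton_subset_iff.mpr hx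

lemma mem_F_of_vert {b : Finset ι} {F : Finset (Finset ι)} {s : Finset ι}
    (hs : s ∈ forestVerts b F) (h2 : 2 ≤ s.card) : s ∈ F := by
  rcases mem_forestVerts.mp hs with h | ⟨x, _, rfl⟩
  · exact h
  · simp at h2

/-- Laminarity of the vertex family of a reduced forest. -/
lemma laminar_verts {b : Finset ι} {F : Finset (Finset ι)} (hF : IsReducedForest b F)
    {s t : Finset ι} (hs : s ∈ forestVerts b F) (ht : t ∈ forestVerts b F) :
    s ⊆ t ∨ t ⊆ s ∨ Disjoint s t := by
  rcases mem_forestVerts.mp hs with h | ⟨x, _, rfl⟩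
  · rcases mem_forestVerts.mp ht with h' | ⟨y, _, rfl⟩
    · exact hF.2 s h t h'
    · by_cases hy : y ∈ s
      · exact Or.inr (Or.inl (singleton_subset_iff.mpr hy))
      · exact Or.inr (Or.inr (disjoint_singleton_right.mpr hy))
  · by_cases hx : x ∈ t
    · exact Or.inl (singleton_subset_iff.mpr hx)
    · exact Or.inr (Or.inr (disjoint_singleton_left.mpr hx))

/-- Strict monotonicity of a gap-free colouring along strict inclusions of vertices. -/
lemma col_strictMono {b : Finset ι} {F : Finset (Finset ι)} {c : Finset ι → ℕ} {r : ℕ}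
    (hc : IsGapFreeColouring b F c r) :
    ∀ u ∈ forestVerts b F, ∀ v ∈ forestVerts b F, u ⊂ v → c u < c v := by
  have key : ∀ m : ℕ, ∀ u ∈ forestVerts b F, ∀ v ∈ forestVerts b F,
      u ⊂ v → v.card - u.card ≤ m → c u < c v := by
    intro m
    induction m with
    | zero =>
      intro u hu v hv huv h
      have := card_lt_card huv; omega
    | succ m ih =>
      intro u hu v hv huv _
      by_cases hbet : ∃ w ∈ forestVerts b F, u ⊂ w ∧ w ⊂ v
      · obtain ⟨w, hw, h1, h2⟩ := hbet
        have c1 := card_lt_card h1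
        have c2 := card_lt_card h2
        have hcu := card_lt_card huv
        exact lt_trans (ih u hu w hw h1 (by omega)) (ih w hw v hv h2 (by omega))
      · push_neg at hbet
        exact hc.2.2.2.1 u v ⟨hu, hv, huv, fun w hw h => (hbet w hw h.1) h.2⟩
  intro u hu v hv huv
  exact key (v.card - u.card) u hu v hv huv le_rfl


end Stmt10Aux

section PhiSide

variable {ι : Type*} [DecidableEq ι] [Fintype ι] {n : ℕ}

/-- The forest associated to an upward sequence: all blocks of size at least two. -/
def Fof (ω : List (Finpartition (univ : Finset ι))) : Finset (Finset ι) :=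
  (ω.foldr (fun p (s : Finset (Finset ι)) => p.parts ∪ s) (∅ : Finset (Finset ι))).filter fun s => 2 ≤ s.card

/-- The colouring associated to an upward sequence: one plus the first level where `s`
appears as a block. -/
def cof (ω : List (Finpartition (univ : Finset ι))) (s : Finset ι) : ℕ :=
  if s ∈ Fof ω then ω.findIdx (fun p => decide (s ∈ p.parts)) + 1 else 0

lemma mem_foldr_parts {ω : List (Finpartition (univ : Finset ι))} {s : Finset ι} :
    s ∈ ω.foldr (fun p t => p.parts ∪ t) ∅ ↔ ∃ p ∈ ω, s ∈ p.parts := by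
  induction ω with
  | nil => simp
  | cons p l ih => simp [ih]

lemma mem_Fof {ω : List (Finpartition (univ : Finset ι))} {s : Finset ι} :
    s ∈ Fof ω ↔ (∃ p ∈ ω, s ∈ p.parts) ∧ 2 ≤ s.card := by
  rw [Fof, mem_filter, mem_foldr_parts]

lemma up_le {part : ι → Fin n} {ω : List (Finpartition (univ : Finset ι))}
    (hω : ω ∈ UpSeqSet univ part) {i j : ℕ} (hij : i ≤ j) (hj : j < ω.length) :
    ω[i]'(lt_of_le_of_lt hij hj) ≤ ω[j] := by
  rcases eq_or_lt_of_le hij with rfl | h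
  · exact le_rfl
  · exact le_of_lt (List.pairwise_iff_getElem.mp (List.isChain_iff_pairwise.mp hω.2.1)
      i j _ hj h)

lemma eq_of_subset_parts {P : Finpartition (univ : Finset ι)} {s t : Finset ι}
    (hs : s ∈ P.parts) (ht : t ∈ P.parts) (h : s ⊆ t) : s = t := by
  obtain ⟨x, hx⟩ := P.nonempty_of_mem_parts hs
  exact P.eq_of_mem_parts hs ht hx (h hx)

lemma block_subset_block {part : ι → Fin n} {ω : List (Finpartition (univ : Finset ι))}
    (hω : ω ∈ UpSeqSet univ part) {i j : ℕ} (hij : i ≤ j) (hj : j < ω.length)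
    {s : Finset ι} (hs : s ∈ (ω[i]'(lt_of_le_of_lt hij hj)).parts) :
    ∃ t ∈ ω[j].parts, s ⊆ t := by
  obtain ⟨t, ht, hst⟩ := up_le hω hij hj hs
  exact ⟨t, ht, hst⟩

/-- A block which is a block at two levels is a block at every intermediate level. -/
lemma sandwich {part : ι → Fin n} {ω : List (Finpartition (univ : Finset ι))}
    (hω : ω ∈ UpSeqSet univ part) {i j l : ℕ} (hij : i ≤ j) (hjl : j ≤ l)
    (hl : l < ω.length) {s : Finset ι}
    (hsi : s ∈ (ω[i]'(by omega)).parts) (hsl : s ∈ (ω[l]'hl).parts) :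
    s ∈ (ω[j]'(by omega)).parts := by
  obtain ⟨t, ht, hst⟩ := block_subset_block hω hij (by omega : j < ω.length) hsi
  obtain ⟨u, hu, htu⟩ := block_subset_block hω hjl hl ht
  have : s = u := eq_of_subset_parts hsl hu (hst.trans htu)
  subst this
  rwa [subset_antisymm htu hst] at ht
  
end PhiSide

section PhiSide2

variable {ι : Type*} [DecidableEq ι] [Fintype ι] {n : ℕ}

lemma cof_spec {ω : List (Finpartition (univ : Finset ι))} {s : Finset ι}
    (hs : s ∈ Fof ω) :
    ∃ i : ℕ, ∃ hi : i < ω.length, cof ω s = i + 1 ∧ s ∈ (ω[i]'hi).parts ∧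
      ∀ j (hj : j < i), s ∉ (ω[j]'(by omega)).parts := by
  obtain ⟨⟨p, hp, hsp⟩, h2⟩ := mem_Fof.mp hs
  have hex : ∃ p ∈ ω, (fun p => decide (s ∈ Finpartition.parts p)) p := ⟨p, hp, by simpa⟩
  have hlt := List.findIdx_lt_length_of_exists hex
  refine ⟨_, hlt, ?_, ?_, ?_⟩
  · rw [cof, if_pos hs]
  · have := @List.findIdx_getElem _ _ _ hlt
    simpa using this
  · intro j hj
    have := List.not_of_lt_findIdx hj
    simpa using this

lemma cof_eq {ω : List (Finpartition (univ : Finset ι))} {s : Finset ι} {i : ℕ}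
    (hi : i < ω.length) (h2 : 2 ≤ s.card) (h1 : s ∈ (ω[i]'hi).parts)
    (hmin : ∀ j (hj : j < i), s ∉ (ω[j]'(by omega)).parts) : cof ω s = i + 1 := by
  have hs : s ∈ Fof ω := mem_Fof.mpr ⟨⟨ω[i], List.getElem_mem hi, h1⟩, h2⟩
  obtain ⟨i', hi', he, h1', hmin'⟩ := cof_spec hs
  rcases lt_trichotomy i i' with h | h | h
  · exact absurd h1 (hmin' i h)
  · omega
  · exact absurd h1' (hmin i' h)

lemma cof_pos {ω : List (Finpartition (univ : Finset ι))} {s : Finset ι}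
    (hs : s ∈ Fof ω) : 1 ≤ cof ω s := by
  obtain ⟨i, hi, he, _⟩ := cof_spec hs; omega

lemma cof_eq_zero {ω : List (Finpartition (univ : Finset ι))} {s : Finset ι}
    (hs : s ∉ Fof ω) : cof ω s = 0 := by rw [cof, if_neg hs]

lemma cof_singleton {ω : List (Finpartition (univ : Finset ι))} (x : ι) :
    cof ω {x} = 0 := cof_eq_zero (fun h => by simpa using (mem_Fof.mp h).2)

/-- A block of some level is a vertex of the associated forest. -/
lemma block_mem_verts {ω : List (Finpartition (univ : Finset ι))} {i : ℕ}
    (hi : i < ω.length) {s : Finset ι} (hs : s ∈ (ω[i]'hi).parts) :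
    s ∈ forestVerts univ (Fof ω) := by
  rcases le_or_gt 2 s.card with h2 | h2
  · exact mem_forestVerts.mpr (Or.inl (mem_Fof.mpr ⟨⟨ω[i], List.getElem_mem hi, hs⟩, h2⟩))
  · obtain ⟨x, hx⟩ := (ω[i]'hi).nonempty_of_mem_parts hs
    have : s.card = 1 := le_antisymm (by omega) (card_pos.mpr ⟨x, hx⟩)
    obtain ⟨y, rfl⟩ := card_eq_one.mp this
    exact singleton_mem_forestVerts (mem_univ y)

/-- Upper bound on the colour of a block of level `i`. -/
lemma cof_le_of_block {part : ι → Fin n} {ω : List (Finpartition (univ : Finset ι))}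
    (hω : ω ∈ UpSeqSet univ part) {i : ℕ} (hi : i < ω.length) {s : Finset ι}
    (hs : s ∈ (ω[i]'hi).parts) : cof ω s ≤ i + 1 := by
  by_cases hF : s ∈ Fof ω
  · obtain ⟨i', hi', he, h1', hmin'⟩ := cof_spec hF
    rw [he]
    by_contra h
    exact hmin' i (by omega) hs
  · rw [cof_eq_zero hF]; omega

/-- Strict monotonicity of `cof` along strict inclusions of vertices. -/
lemma cof_lt {part : ι → Fin n} {ω : List (Finpartition (univ : Finset ι))}
    (hω : ω ∈ UpSeqSet univ part) {u s : Finset ι}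
    (hu : u ∈ forestVerts univ (Fof ω)) (hs : s ∈ Fof ω) (h : u ⊂ s) :
    cof ω u < cof ω s := by
  by_cases huF : u ∈ Fof ω
  · obtain ⟨i, hi, heu, h1u, _⟩ := cof_spec huF
    obtain ⟨j, hj, hes, h1s, _⟩ := cof_spec hs
    rw [heu, hes]
    have : i < j := by
      by_contra hij
      push_neg at hij
      obtain ⟨t, ht, hst⟩ := block_subset_block hω hij hi h1s
      have : u = t := eq_of_subset_parts h1u ht (h.subset.trans hst)
      subst this
      exact h.not_subset hst
    omega
  · rw [cof_eq_zero huF]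
    exact cof_pos hs

/-- The key characterization: the blocks of level `i` are exactly the vertices which are
maximal among those of colour at most `i + 1`. -/
lemma block_iff {part : ι → Fin n} {ω : List (Finpartition (univ : Finset ι))}
    (hω : ω ∈ UpSeqSet univ part) {i : ℕ} (hi : i < ω.length) {s : Finset ι} :
    s ∈ (ω[i]'hi).parts ↔ s ∈ forestVerts univ (Fof ω) ∧ cof ω s ≤ i + 1 ∧
      ∀ u ∈ forestVerts univ (Fof ω), s ⊂ u → ¬(cof ω u ≤ i + 1) := by
  constructor
  · intro hs
    refine ⟨block_mem_verts hi hs, cof_le_of_block hω hi hs, ?_⟩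
    intro u hu hsu hcu
    -- u is a vertex strictly above s with colour ≤ i+1; derive a contradiction
    have huF : u ∈ Fof ω := by
      refine mem_F_of_vert hu ?_
      obtain ⟨x, hx⟩ := (ω[i]'hi).nonempty_of_mem_parts hs
      obtain ⟨y, hy, hyne⟩ := exists_of_ssubset hsu
      exact Nat.lt_iff_add_one_le.mp (Finset.one_lt_card.mpr
        ⟨x, hsu.subset hx, y, hy, fun h => hyne (h ▸ hx)⟩)
    obtain ⟨j, hj, hej, h1j, _⟩ := cof_spec huF
    have hji : j ≤ i := by omega
    obtain ⟨t, ht, hut⟩ := block_subset_block hω hji hi h1j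
    have : s = t := eq_of_subset_parts hs ht (hsu.subset.trans hut)
    subst this
    exact hsu.not_subset hut
  · rintro ⟨hv, hle, hmax⟩
    rcases mem_forestVerts.mp hv with hF | ⟨x, _, rfl⟩
    · obtain ⟨j, hj, hej, h1j, _⟩ := cof_spec hF
      have hji : j ≤ i := by omega
      obtain ⟨t, ht, hst⟩ := block_subset_block hω hji hi h1j
      rcases eq_or_ne s t with rfl | hne
      · exact ht
      · exact absurd (cof_le_of_block hω hi ht) (hmax t (block_mem_verts hi ht)
          (Finset.ssubset_iff_subset_ne.mpr ⟨hst, hne⟩))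
    · obtain ⟨t, ht, hxt⟩ := (ω[i]'hi).exists_mem (mem_univ x)
      have hst : ({x} : Finset ι) ⊆ t := singleton_subset_iff.mpr hxt
      rcases eq_or_ne ({x} : Finset ι) t with rfl | hne
      · exact ht
      · exact absurd (cof_le_of_block hω hi ht) (hmax t (block_mem_verts hi ht)
          (Finset.ssubset_iff_subset_ne.mpr ⟨hst, hne⟩))

end PhiSide2

section Kappa

variable {ι : Type*} [DecidableEq ι] {A : Type*}

lemma kappaVert_singleton (k : Multiset A → A) (b : Finset ι) (F : Finset (Finset ι))
    (a : ι → A) (x : ι) : kappaVert k b F a {x} = a x := by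
  rw [kappaVert]
  have h : ({x} : Finset ι).card = 1 := card_singleton x
  rw [dif_pos h]
  congr 1
  have := (Finset.card_eq_one.mp h).choose_spec
  exact (singleton_injective this.symm)

lemma kappaVert_internal (k : Multiset A → A) (b : Finset ι) (F : Finset (Finset ι))
    (a : ι → A) {s : Finset ι} (h : s.card ≠ 1) :
    kappaVert k b F a s = k (Multiset.map (kappaVert k b F a) (childrenF b F s).val) := by
  rw [kappaVert, dif_neg h]
  congr 1
  have : (childrenF b F s).attach.val.map (fun t => kappaVert k b F a t.1) =
      ((childrenF b F s).attach.val.map Subtype.val).map (kappaVert k b F a) := by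
    rw [Multiset.map_map]; rfl
  rw [this]
  congr 1
  rw [Finset.attach_val, Multiset.attach_map_val]

end Kappa

section Children

variable {ι : Type*} [DecidableEq ι] [Fintype ι] {n : ℕ}

lemma mem_childrenF {b : Finset ι} {F : Finset (Finset ι)} {s t : Finset ι} :
    t ∈ childrenF b F s ↔ t ∈ forestVerts b F ∧ t ⊂ s ∧
      ∀ u ∈ forestVerts b F, ¬(t ⊂ u ∧ u ⊂ s) := by
  simp only [childrenF, mem_filter]

lemma isReducedForest_Fof {part : ι → Fin n} {ω : List (Finpartition (univ : Finset ι))}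
    (hω : ω ∈ UpSeqSet univ part) : IsReducedForest univ (Fof ω) := by
  constructor
  · intro s hs
    exact ⟨subset_univ s, (mem_Fof.mp hs).2⟩
  · intro s hs t ht
    obtain ⟨i, hi, _, hsi, _⟩ := cof_spec hs
    obtain ⟨j, hj, _, htj, _⟩ := cof_spec ht
    rcases le_or_gt i j with hij | hij
    · obtain ⟨u, hu, hsu⟩ := block_subset_block hω hij hj hsi
      rcases eq_or_ne u t with rfl | hne
      · exact Or.inl hsu
      · exact Or.inr (Or.inr (Finset.disjoint_left.mpr fun x hx hxt =>
          hne ((ω[j]'hj).eq_of_mem_parts hu htj (hsu hx) hxt)))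
    · obtain ⟨u, hu, htu⟩ := block_subset_block hω hij.le hi htj
      rcases eq_or_ne u s with rfl | hne
      · exact Or.inr (Or.inl htu)
      · exact Or.inr (Or.inr (Finset.disjoint_right.mpr fun x hx hxt =>
          hne ((ω[i]'hi).eq_of_mem_parts hu hsi (htu hx) hxt)))

lemma cof_le_length {ω : List (Finpartition (univ : Finset ι))} (s : Finset ι) :
    cof ω s ≤ ω.length := by
  by_cases hs : s ∈ Fof ω
  · obtain ⟨i, hi, he, _⟩ := cof_spec hs; omega
  · rw [cof_eq_zero hs]; omega

lemma cof_block_zero {ω : List (Finpartition (univ : Finset ι))} {d : Finset ι}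
    (h0 : 0 < ω.length) (hd : d ∈ (ω[0]'h0).parts) (h2 : 2 ≤ d.card) : cof ω d = 1 :=
  cof_eq h0 h2 hd (fun j hj => by omega)

/-- Children of a first-level block: all the singletons of its elements. -/
lemma children_base {part : ι → Fin n} {ω : List (Finpartition (univ : Finset ι))}
    (hω : ω ∈ UpSeqSet univ part) (h0 : 0 < ω.length) {d : Finset ι}
    (hd : d ∈ (ω[0]'h0).parts) (h2 : 2 ≤ d.card) :
    childrenF univ (Fof ω) d = d.image (fun x => ({x} : Finset ι)) := by
  have hdF : d ∈ Fof ω := mem_Fof.mpr ⟨⟨_, List.getElem_mem h0, hd⟩, h2⟩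
  have hcd : cof ω d = 1 := cof_block_zero h0 hd h2
  ext t
  rw [mem_childrenF, mem_image]
  constructor
  · rintro ⟨hv, hts, _⟩
    have htF : t ∉ Fof ω := by
      intro htF
      have := cof_lt hω hv hdF hts
      have := cof_pos htF
      omega
    rcases mem_forestVerts.mp hv with h | ⟨x, _, rfl⟩
    · exact absurd h htF
    · exact ⟨x, singleton_subset_iff.mp hts.subset, rfl⟩
  · rintro ⟨x, hx, rfl⟩
    have hxs : ({x} : Finset ι) ⊂ d := by
      refine Finset.ssubset_iff_subset_ne.mpr ⟨singleton_subset_iff.mpr hx, ?_⟩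
      intro h; rw [← h] at h2; simp at h2
    refine ⟨singleton_mem_forestVerts (mem_univ x), hxs, ?_⟩
    rintro u hu ⟨hxu, hud⟩
    have huF : u ∈ Fof ω := by
      refine mem_F_of_vert hu ?_
      obtain ⟨y, hy, hyx⟩ := exists_of_ssubset hxu
      exact Nat.lt_iff_add_one_le.mp (Finset.one_lt_card.mpr
        ⟨x, hxu.subset (mem_singleton_self x), y, hy, fun h => hyx (by simp [← h])⟩)
    have := cof_lt hω (mem_forestVerts.mpr (Or.inl huF)) hdF hud
    have := cof_pos huF
    omega

/-- Children of a genuinely new block of level `i+1`: the blocks of level `i` it contains. -/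
lemma children_step {part : ι → Fin n} {ω : List (Finpartition (univ : Finset ι))}
    (hω : ω ∈ UpSeqSet univ part) {i : ℕ} (hi1 : i + 1 < ω.length) {d : Finset ι}
    (hd : d ∈ (ω[i+1]'hi1).parts) (hnd : d ∉ (ω[i]'(by omega)).parts) :
    childrenF univ (Fof ω) d = (ω[i]'(by omega)).parts.filter (· ⊆ d) ∧
      2 ≤ d.card ∧ cof ω d = i + 2 := by
  have hi : i < ω.length := by omega
  -- every block of level i meeting d is contained in d
  have hblocks : ∀ w ∈ (ω[i]'hi).parts, (w ∩ d).Nonempty → w ⊆ d := by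
    intro w hw ⟨x, hx⟩
    obtain ⟨t, ht, hwt⟩ := block_subset_block hω (by omega : i ≤ i+1) hi1 hw
    have : t = d := (ω[i+1]'hi1).eq_of_mem_parts ht hd (hwt (mem_inter.mp hx).1)
      (mem_inter.mp hx).2
    rwa [this] at hwt
  have h2 : 2 ≤ d.card := by
    obtain ⟨x, hx⟩ := (ω[i+1]'hi1).nonempty_of_mem_parts hd
    obtain ⟨w, hw, hxw⟩ := (ω[i]'hi).exists_mem (mem_univ x)
    have hwd : w ⊆ d := hblocks w hw ⟨x, mem_inter.mpr ⟨hxw, hx⟩⟩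
    have hwne : w ≠ d := fun h => hnd (h ▸ hw)
    obtain ⟨y, hy, hyw⟩ := exists_of_ssubset (Finset.ssubset_iff_subset_ne.mpr ⟨hwd, hwne⟩)
    have hxy : x ≠ y := fun h => hyw (h ▸ hxw)
    exact Nat.lt_iff_add_one_le.mp (Finset.one_lt_card.mpr ⟨x, hx, y, hy, hxy⟩)
  have hdF : d ∈ Fof ω := mem_Fof.mpr ⟨⟨_, List.getElem_mem hi1, hd⟩, h2⟩
  have hcd : cof ω d = i + 2 := by
    refine cof_eq hi1 h2 hd ?_
    intro j hj hdj
    exact hnd (sandwich hω (by omega : j ≤ i) (by omega : i ≤ i+1) hi1 hdj hd)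
  refine ⟨?_, h2, hcd⟩
  have hRF := isReducedForest_Fof hω
  ext t
  rw [mem_childrenF, mem_filter]
  constructor
  · rintro ⟨hv, hts, hnb⟩
    refine ⟨(block_iff hω hi).mpr ⟨hv, ?_, ?_⟩, hts.subset⟩
    · have := cof_lt hω hv hdF hts; omega
    · intro u hu htu hcu
      have htne := vert_nonempty (fun s hs => (mem_Fof.mp hs).2) hv
      have hdv : d ∈ forestVerts univ (Fof ω) := mem_forestVerts.mpr (Or.inl hdF)
      rcases laminar_verts hRF hu hdv with h | h | h
      · rcases eq_or_ne u d with rfl | hne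
        · omega
        · exact hnb u hu ⟨htu, Finset.ssubset_iff_subset_ne.mpr ⟨h, hne⟩⟩
      · rcases eq_or_ne d u with rfl | hne
        · omega
        · have huF : u ∈ Fof ω := mem_F_of_vert hu (le_trans h2 (card_le_card h))
          have := cof_lt hω hdv huF (Finset.ssubset_iff_subset_ne.mpr ⟨h, hne⟩)
          omega
      · obtain ⟨x, hx⟩ := htne
        exact (Finset.disjoint_left.mp h (htu.subset hx)) (hts.subset hx)
  · rintro ⟨ht, htd⟩
    have htv := block_mem_verts hi ht
    have htsd : t ⊂ d := Finset.ssubset_iff_subset_ne.mpr ⟨htd, fun h => hnd (h ▸ ht)⟩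
    refine ⟨htv, htsd, ?_⟩
    rintro u hu ⟨htu, hud⟩
    have hmax := ((block_iff hω hi).mp ht).2.2 u hu htu
    have : cof ω u < cof ω d := cof_lt hω hu hdF hud
    omega

/-- The roots of the forest are the blocks of the last level. -/
lemma roots_eq {part : ι → Fin n} {ω : List (Finpartition (univ : Finset ι))}
    (hω : ω ∈ UpSeqSet univ part) (h0 : 0 < ω.length) :
    rootsF univ (Fof ω) = (ω[ω.length - 1]'(by omega)).parts := by
  ext s
  simp only [rootsF, mem_filter]
  constructor
  · rintro ⟨hv, hmax⟩
    refine (block_iff hω (by omega : ω.length - 1 < ω.length)).mpr ⟨hv, ?_, ?_⟩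
    · have := cof_le_length (ω := ω) s; omega
    · intro u hu hsu _
      exact hmax u hu hsu
  · intro hs
    have h := (block_iff hω (by omega : ω.length - 1 < ω.length)).mp hs
    refine ⟨h.1, fun u hu hsu => ?_⟩
    have hcu := cof_le_length (ω := ω) u
    exact h.2.2 u hu hsu (by omega)

end Children

section MainKappa

variable {ι : Type*} [DecidableEq ι] [Fintype ι] {n : ℕ} {A : Type*}

lemma filter_subset_self_parts {P : Finpartition (univ : Finset ι)} {d : Finset ι}
    (hd : d ∈ P.parts) : P.parts.filter (· ⊆ d) = {d} := by
  ext e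
  simp only [mem_filter, mem_singleton]
  constructor
  · rintro ⟨he, hed⟩; exact eq_of_subset_parts he hd hed
  · rintro rfl; exact ⟨hd, subset_rfl⟩

lemma levelVal_eq_kappaVert {part : ι → Fin n} {ω : List (Finpartition (univ : Finset ι))}
    (hω : ω ∈ UpSeqSet univ part) (k : Multiset A → A) (hk1 : ∀ x : A, k {x} = x)
    (a : ι → A) :
    ∀ m (hm : m < ω.length), ∀ d ∈ (ω[m]'hm).parts,
      levelVal k a ((ω.take m).reverse) d = kappaVert k univ (Fof ω) a d := by
  intro m
  induction m with
  | zero =>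
    intro hm d hd
    simp only [List.take_zero, List.reverse_nil]
    show k (Multiset.map a d.val) = _
    by_cases h1 : d.card = 1
    · obtain ⟨y, rfl⟩ := card_eq_one.mp h1
      rw [kappaVert_singleton]
      simp [hk1]
    · have h2 : 2 ≤ d.card := by
        have := card_pos.mpr ((ω[0]'hm).nonempty_of_mem_parts hd); omega
      rw [kappaVert_internal k univ (Fof ω) a h1, children_base hω hm hd h2]
      congr 1
      rw [Finset.image_val_of_injOn (fun x _ y _ h => singleton_injective h),
        Multiset.map_map]
      exact (Multiset.map_congr rfl fun x _ => (kappaVert_singleton k univ (Fof ω) a x).symm)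
  | succ m ih =>
    intro hm d hd
    have hm' : m < ω.length := by omega
    have htake : (ω.take (m+1)).reverse = ω[m] :: (ω.take m).reverse := by
      rw [List.take_succ, List.getElem?_eq_getElem hm']
      simp
    rw [htake]
    show k (Multiset.map (levelVal k a ((ω.take m).reverse))
      ((ω[m]'hm').parts.filter (· ⊆ d)).val) = _
    by_cases hd' : d ∈ (ω[m]'hm').parts
    · rw [filter_subset_self_parts hd']
      simp only [singleton_val, Multiset.map_singleton, hk1]
      exact ih hm' d hd'
    · obtain ⟨hch, h2, _⟩ := children_step hω hm hd hd'
      rw [kappaVert_internal k univ (Fof ω) a (by omega), hch]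
      congr 1
      refine Multiset.map_congr rfl fun e he => ?_
      rw [← Finset.mem_def] at he
      exact ih hm' e (mem_filter.mp he).1

lemma kappaUpSeq_eq_starProd {R : Type*} [CommRing R] [AddCommGroup A] [Module R A]
    (T : TwoMulAlg R A) (k : Multiset A → A) (a : ι → A)
    {ω : List (Finpartition (univ : Finset ι))} {p : Finpartition (univ : Finset ι)}
    {rest : List (Finpartition (univ : Finset ι))} (h : ω.reverse = p :: rest) :
    kappaUpSeq T k a ω = T.starProd p.parts (levelVal k a rest) := by
  rw [kappaUpSeq, h]

/-- The cumulant of an upward sequence equals the cumulant of its associated forest. -/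
lemma kappaUpSeq_eq_kappaForest {R : Type*} [CommRing R] [AddCommGroup A] [Module R A]
    (T : TwoMulAlg R A) (k : Multiset A → A) (hk1 : ∀ x : A, k {x} = x)
    {part : ι → Fin n} {ω : List (Finpartition (univ : Finset ι))}
    (hω : ω ∈ UpSeqSet univ part) (a : ι → A) :
    kappaUpSeq T k a ω = kappaForest T k univ (Fof ω) a := by
  have hne : ω ≠ [] := hω.1
  have h0 : 0 < ω.length := List.length_pos_iff.mpr hne
  have hrev : ω.reverse = ω.getLast hne :: (ω.take (ω.length - 1)).reverse := by
    conv_lhs => rw [← List.dropLast_append_getLast hne]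
    rw [List.dropLast_eq_take]
    simp
  rw [kappaUpSeq_eq_starProd T k a hrev, kappaForest, roots_eq hω h0]
  have hlast : ω.getLast hne = ω[ω.length - 1]'(by omega) := List.getLast_eq_getElem hne
  rw [hlast]
  unfold TwoMulAlg.starProd
  exact @Finset.fold_congr _ _ T.star ⟨T.star_comm⟩ ⟨T.star_assoc⟩ _ _ _ _
    (fun d hd => levelVal_eq_kappaVert hω k hk1 a (ω.length - 1) (by omega) d hd)

end MainKappa

section PhiMapsTo

variable {ι : Type*} [DecidableEq ι] [Fintype ι] {n : ℕ}

lemma head_mixing {part : ι → Fin n} {ω : List (Finpartition (univ : Finset ι))}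
    (hω : ω ∈ UpSeqSet univ part) (h0 : 0 < ω.length) :
    IsMixingPartition univ (ω[0]'h0) part := by
  refine hω.2.2 _ ?_
  rw [Option.mem_def, List.head?_eq_getElem?, List.getElem?_eq_getElem h0]

/-- There is a mixing block: a block of the first partition of size at least two containing
elements of two distinct classes. -/
lemma exists_mixing_block {part : ι → Fin n} {ω : List (Finpartition (univ : Finset ι))}
    (hω : ω ∈ UpSeqSet univ part) (h0 : 0 < ω.length) :
    ∃ s ∈ (ω[0]'h0).parts, 2 ≤ s.card ∧ ∃ x ∈ s, ∃ y ∈ s, part x ≠ part y := by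
  obtain ⟨s, hs, hmix⟩ := head_mixing hω h0
  have hxy : ∃ x ∈ s, ∃ y ∈ s, part x ≠ part y := by
    by_contra h
    push_neg at h
    obtain ⟨x0, hx0⟩ := (ω[0]'h0).nonempty_of_mem_parts hs
    refine hmix (part x0) ?_
    intro z hz
    rw [mem_filter]
    exact ⟨mem_univ z, h z hz x0 hx0⟩
  obtain ⟨x, hx, y, hy, hne⟩ := hxy
  refine ⟨s, hs, ?_, x, hx, y, hy, hne⟩
  exact Nat.lt_iff_add_one_le.mp (Finset.one_lt_card.mpr
    ⟨x, hx, y, hy, fun h => hne (h ▸ rfl)⟩)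

lemma gapFree_cof {part : ι → Fin n} {ω : List (Finpartition (univ : Finset ι))}
    (hω : ω ∈ UpSeqSet univ part) :
    IsGapFreeColouring univ (Fof ω) (cof ω) ω.length := by
  have h0 : 0 < ω.length := List.length_pos_iff.mpr hω.1
  refine ⟨fun s _ => cof_le_length s, ?_, fun x _ => cof_singleton x, ?_, ?_⟩
  · intro j hj
    match j with
    | 0 =>
      obtain ⟨s, hs, h2, _⟩ := exists_mixing_block hω h0
      obtain ⟨x, hx⟩ := (ω[0]'h0).nonempty_of_mem_parts hs
      exact ⟨{x}, singleton_mem_forestVerts (mem_univ x), cof_singleton x⟩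
    | 1 =>
      obtain ⟨s, hs, h2, _⟩ := exists_mixing_block hω h0
      exact ⟨s, block_mem_verts h0 hs, cof_block_zero h0 hs h2⟩
    | (i+2) =>
      have hi1 : i + 1 < ω.length := by omega
      have hlt : (ω[i]'(by omega)) < ω[i+1] := List.pairwise_iff_getElem.mp
        (List.isChain_iff_pairwise.mp hω.2.1) i (i+1) (by omega) hi1 (by omega)
      have : ∃ s ∈ (ω[i+1]'hi1).parts, s ∉ (ω[i]'(by omega)).parts := by
        by_contra h
        push_neg at h
        exact absurd (fun s hs => ⟨s, h s hs, subset_rfl⟩ :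
          (ω[i+1]'hi1) ≤ ω[i]'(by omega)) (not_le_of_gt hlt)
      obtain ⟨s, hs, hns⟩ := this
      obtain ⟨_, _, hc⟩ := children_step hω hi1 hs hns
      exact ⟨s, block_mem_verts hi1 hs, hc⟩
  · intro t s hts
    obtain ⟨htv, hsv, hsub, _⟩ := hts
    obtain ⟨x, hx⟩ := vert_nonempty (fun u hu => (mem_Fof.mp hu).2) htv
    obtain ⟨y, hy, hyt⟩ := exists_of_ssubset hsub
    have hsF : s ∈ Fof ω := mem_F_of_vert hsv (Nat.lt_iff_add_one_le.mp
      (Finset.one_lt_card.mpr ⟨x, hsub.subset hx, y, hy, fun h => hyt (h ▸ hx)⟩))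
    exact cof_lt hω htv hsF hsub
  · intro s hs
    refine cof_eq_zero fun h => hs (mem_forestVerts.mpr (Or.inl h))

lemma weaklyMixing_cof {part : ι → Fin n} {ω : List (Finpartition (univ : Finset ι))}
    (hω : ω ∈ UpSeqSet univ part) :
    IsWeaklyMixing univ (Fof ω) part (cof ω) := by
  have h0 : 0 < ω.length := List.length_pos_iff.mpr hω.1
  obtain ⟨s, hs, h2, x, hx, y, hy, hne⟩ := exists_mixing_block hω h0
  have hsv := block_mem_verts h0 hs
  refine Or.inr ⟨s, hsv, cof_block_zero h0 hs h2, x, y, ?_, ?_, hne⟩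
  · have : ({x} : Finset ι) ∈ childrenF univ (Fof ω) s := by
      rw [children_base hω h0 hs h2]
      exact mem_image_of_mem _ hx
    obtain ⟨h1', h2', h3'⟩ := mem_childrenF.mp this
    exact ⟨h1', hsv, h2', fun u hu h => h3' u hu ⟨h.1, h.2⟩⟩
  · have : ({y} : Finset ι) ∈ childrenF univ (Fof ω) s := by
      rw [children_base hω h0 hs h2]
      exact mem_image_of_mem _ hy
    obtain ⟨h1', h2', h3'⟩ := mem_childrenF.mp this
    exact ⟨h1', hsv, h2', fun u hu h => h3' u hu ⟨h.1, h.2⟩⟩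

end PhiMapsTo

section Surj

variable {ι : Type*} [DecidableEq ι] [Fintype ι] {n : ℕ}

/-- The partition of level `i` extracted from a coloured forest: the maximal vertices of
colour at most `i + 1`. -/
def nuOf (F : Finset (Finset ι)) (c : Finset ι → ℕ) {r : ℕ} (hF : IsReducedForest univ F)
    (hc : IsGapFreeColouring univ F c r) (i : ℕ) : Finpartition (univ : Finset ι) where
  parts := (forestVerts univ F).filter fun v => c v ≤ i + 1 ∧
    ∀ u ∈ forestVerts univ F, v ⊂ u → ¬(c u ≤ i + 1)
  supIndep := by
    rw [Finset.supIndep_iff_pairwiseDisjoint]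
    intro u hu v hv hne
    simp only [coe_filter, Set.mem_setOf_eq] at hu hv
    obtain ⟨huv, hcu, hmu⟩ := hu
    obtain ⟨hvv, hcv, hmv⟩ := hv
    rcases laminar_verts hF huv hvv with h | h | h
    · exact absurd hcv (hmu v hvv (Finset.ssubset_iff_subset_ne.mpr ⟨h, hne⟩))
    · exact absurd hcu (hmv u huv (Finset.ssubset_iff_subset_ne.mpr ⟨h, hne.symm⟩))
    · exact h
  sup_parts := by
    apply Finset.Subset.antisymm
    · intro y hy
      exact mem_univ y
    · intro x _
      set S := (forestVerts univ F).filter (fun v => x ∈ v ∧ c v ≤ i + 1) with hS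
      have hSne : S.Nonempty := ⟨{x}, by
        simp only [hS, mem_filter]
        exact ⟨singleton_mem_forestVerts (mem_univ x), mem_singleton_self x,
          by rw [hc.2.2.1 x (mem_univ x)]; omega⟩⟩
      obtain ⟨v, hv, hvmax⟩ := S.exists_max_image (fun v => v.card) hSne
      simp only [hS, mem_filter] at hv
      refine Finset.mem_sup.mpr ⟨v, ?_, hv.2.1⟩
      rw [mem_filter]
      refine ⟨hv.1, hv.2.2, fun u hu hvu hcu => ?_⟩
      have : u ∈ S := by
        simp only [hS, mem_filter]
        exact ⟨hu, hvu.subset hv.2.1, hcu⟩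
      have := hvmax u this
      have := card_lt_card hvu
      omega
  bot_notMem := by
    rw [mem_filter]
    rintro ⟨hv, -⟩
    rcases mem_forestVerts.mp hv with h | ⟨x, _, h⟩
    · have := (hF.1 _ h).2; simp at this
    · exact absurd h.symm (singleton_ne_empty x)

lemma mem_nuOf {F : Finset (Finset ι)} {c : Finset ι → ℕ} {r : ℕ}
    {hF : IsReducedForest univ F} {hc : IsGapFreeColouring univ F c r} {i : ℕ}
    {s : Finset ι} :
    s ∈ (nuOf F c hF hc i).parts ↔ s ∈ forestVerts univ F ∧ c s ≤ i + 1 ∧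
      ∀ u ∈ forestVerts univ F, s ⊂ u → ¬(c u ≤ i + 1) := by
  simp only [nuOf, mem_filter]

lemma nuOf_le {F : Finset (Finset ι)} {c : Finset ι → ℕ} {r : ℕ}
    (hF : IsReducedForest univ F) (hc : IsGapFreeColouring univ F c r) (i : ℕ) :
    nuOf F c hF hc i ≤ nuOf F c hF hc (i + 1) := by
  intro v hv
  rw [mem_nuOf] at hv
  obtain ⟨hvv, hcv, _⟩ := hv
  set S := (forestVerts univ F).filter (fun w => v ⊆ w ∧ c w ≤ i + 2) with hS
  have hSne : S.Nonempty := ⟨v, by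
    simp only [hS, mem_filter]
    exact ⟨hvv, subset_rfl, by omega⟩⟩
  obtain ⟨w, hw, hwmax⟩ := S.exists_max_image (fun v => v.card) hSne
  simp only [hS, mem_filter] at hw
  refine ⟨w, ?_, hw.2.1⟩
  rw [mem_nuOf]
  refine ⟨hw.1, hw.2.2, fun u hu hwu hcu => ?_⟩
  have : u ∈ S := by
    simp only [hS, mem_filter]
    exact ⟨hu, hw.2.1.trans hwu.subset, hcu⟩
  have := hwmax u this
  have := card_lt_card hwu
  omega

lemma nuOf_ne {F : Finset (Finset ι)} {c : Finset ι → ℕ} {r : ℕ}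
    (hF : IsReducedForest univ F) (hc : IsGapFreeColouring univ F c r) {i : ℕ}
    (hir : i + 2 ≤ r) : nuOf F c hF hc i ≠ nuOf F c hF hc (i + 1) := by
  intro heq
  obtain ⟨w, hwv, hcw⟩ := hc.2.1 (i + 2) hir
  have hwne : w.Nonempty := vert_nonempty (fun s hs => (hF.1 s hs).2) hwv
  obtain ⟨x, hx⟩ := hwne
  obtain ⟨v, hv, hxv⟩ := (nuOf F c hF hc (i+1)).exists_mem (mem_univ x)
  have hv' := mem_nuOf.mp hv
  -- w ⊆ v
  have hwsub : w ⊆ v := by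
    rcases laminar_verts hF hwv hv'.1 with h | h | h
    · exact h
    · rcases eq_or_ne v w with rfl | hne
      · exact subset_rfl
      · exact absurd (by omega : c w ≤ i + 2)
          (hv'.2.2 w hwv (Finset.ssubset_iff_subset_ne.mpr ⟨h, hne⟩))
    · exact absurd hx (Finset.disjoint_right.mp h hxv)
  -- but v is also a part of level i, so c v ≤ i+1 < i+2 = c w, contradicting monotonicity
  have hvi : v ∈ (nuOf F c hF hc i).parts := by rw [heq]; exact hv
  have hcv : c v ≤ i + 1 := (mem_nuOf.mp hvi).2.1
  rcases eq_or_ne w v with rfl | hne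
  · omega
  · have := col_strictMono hc w hwv v hv'.1 (Finset.ssubset_iff_subset_ne.mpr ⟨hwsub, hne⟩)
    omega

end Surj

section Surj2

variable {ι : Type*} [DecidableEq ι] [Fintype ι] {n : ℕ}

variable {F : Finset (Finset ι)} {c : Finset ι → ℕ} {r : ℕ} {part : ι → Fin n}

/-- The upward sequence associated to a coloured forest. -/
noncomputable def omOf (F : Finset (Finset ι)) (c : Finset ι → ℕ) {r : ℕ}
    (hF : IsReducedForest univ F) (hc : IsGapFreeColouring univ F c r) :
    List (Finpartition (univ : Finset ι)) :=
  List.ofFn (fun j : Fin r => nuOf F c hF hc j)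

lemma omOf_length (hF : IsReducedForest univ F) (hc : IsGapFreeColouring univ F c r) :
    (omOf F c hF hc).length = r := by simp [omOf]

lemma omOf_getElem (hF : IsReducedForest univ F) (hc : IsGapFreeColouring univ F c r)
    {i : ℕ} (hi : i < (omOf F c hF hc).length) :
    (omOf F c hF hc)[i] = nuOf F c hF hc i := by
  simp only [omOf]
  rw [List.getElem_ofFn]

lemma col_pos_of_internal (hF : IsReducedForest univ F)
    (hc : IsGapFreeColouring univ F c r) {s : Finset ι} (hs : s ∈ F) : 1 ≤ c s := by
  obtain ⟨hsub, h2⟩ := hF.1 s hs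
  obtain ⟨x, hx⟩ := card_pos.mp (by omega : 0 < s.card)
  have hxs : ({x} : Finset ι) ⊂ s := by
    refine Finset.ssubset_iff_subset_ne.mpr ⟨singleton_subset_iff.mpr hx, ?_⟩
    intro h; rw [← h] at h2; simp at h2
  have := col_strictMono hc {x} (singleton_mem_forestVerts (mem_univ x))
    s (mem_forestVerts.mpr (Or.inl hs)) hxs
  rw [hc.2.2.1 x (mem_univ x)] at this
  omega

lemma mem_F_nuOf (hF : IsReducedForest univ F) (hc : IsGapFreeColouring univ F c r)
    {s : Finset ι} (hs : s ∈ F) :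
    ∃ i : ℕ, i < r ∧ c s = i + 1 ∧ s ∈ (nuOf F c hF hc i).parts := by
  have h1 : 1 ≤ c s := col_pos_of_internal hF hc hs
  have hsv : s ∈ forestVerts univ F := mem_forestVerts.mpr (Or.inl hs)
  have h2 : c s ≤ r := hc.1 s hsv
  refine ⟨c s - 1, by omega, by omega, ?_⟩
  rw [mem_nuOf]
  refine ⟨hsv, by omega, fun u hu hsu hcu => ?_⟩
  have := col_strictMono hc s hsv u hu hsu
  omega

lemma Fof_omOf (hF : IsReducedForest univ F) (hc : IsGapFreeColouring univ F c r) :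
    Fof (omOf F c hF hc) = F := by
  ext s
  rw [mem_Fof]
  constructor
  · rintro ⟨⟨p, hp, hsp⟩, h2⟩
    obtain ⟨j, rfl⟩ := Set.mem_range.mp (List.mem_ofFn.mp hp)
    exact mem_F_of_vert (mem_nuOf.mp hsp).1 h2
  · intro hs
    obtain ⟨i, hir, _, hmem⟩ := mem_F_nuOf hF hc hs
    exact ⟨⟨nuOf F c hF hc i, List.mem_ofFn.mpr ⟨⟨i, hir⟩, rfl⟩, hmem⟩, (hF.1 s hs).2⟩

lemma cof_omOf (hF : IsReducedForest univ F) (hc : IsGapFreeColouring univ F c r) :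
    cof (omOf F c hF hc) = c := by
  funext s
  by_cases hs : s ∈ F
  · obtain ⟨i, hir, hcs, hmem⟩ := mem_F_nuOf hF hc hs
    have hi : i < (omOf F c hF hc).length := by rw [omOf_length]; omega
    have : cof (omOf F c hF hc) s = i + 1 := by
      refine cof_eq hi (hF.1 s hs).2 ?_ ?_
      · rw [omOf_getElem hF hc hi]; exact hmem
      · intro j hj hsj
        rw [omOf_getElem hF hc (by omega)] at hsj
        have := (mem_nuOf.mp hsj).2.1
        omega
    omega
  · have hnf : s ∉ Fof (omOf F c hF hc) := by rw [Fof_omOf hF hc]; exact hs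
    rw [cof_eq_zero hnf]
    by_cases hsv : s ∈ forestVerts univ F
    · rcases mem_forestVerts.mp hsv with h | ⟨x, _, rfl⟩
      · exact absurd h hs
      · exact (hc.2.2.1 x (mem_univ x)).symm
    · exact (hc.2.2.2.2 s hsv).symm

lemma omOf_mem_UpSeqSet (hF : IsReducedForest univ F) (hc : IsGapFreeColouring univ F c r)
    (hw : IsWeaklyMixing univ F part c) (hr : 1 ≤ r) :
    omOf F c hF hc ∈ UpSeqSet univ part := by
  have hlen := omOf_length hF hc
  refine ⟨by intro h; rw [h] at hlen; simp at hlen; omega, ?_, ?_⟩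
  · rw [show List.Chain' _ _ ↔ List.IsChain _ _ from Iff.rfl, List.isChain_iff_getElem]
    intro i hi
    rw [omOf_getElem hF hc (by omega), omOf_getElem hF hc (by omega)]
    exact lt_of_le_of_ne (nuOf_le hF hc i) (nuOf_ne hF hc (by omega))
  · intro p hp
    rw [Option.mem_def, List.head?_eq_getElem?,
      List.getElem?_eq_getElem (by omega : 0 < (omOf F c hF hc).length)] at hp
    obtain rfl := Option.some_injective _ hp.symm
    rw [omOf_getElem hF hc (by omega)]
    -- the first partition is mixing, thanks to weak mixing of the colouring
    have h1 : ∃ s ∈ forestVerts univ F, c s = 1 ∧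
        ∃ x y : ι, IsChildV univ F {x} s ∧ IsChildV univ F {y} s ∧ part x ≠ part y := by
      rcases hw with h | h
      · obtain ⟨s, hsv, hcs⟩ := hc.2.1 1 hr
        exact absurd hcs (h s hsv)
      · exact h
    obtain ⟨s, hsv, hcs, x, y, hcx, hcy, hne⟩ := h1
    refine ⟨s, ?_, ?_⟩
    · rw [mem_nuOf]
      refine ⟨hsv, by omega, fun u hu hsu hcu => ?_⟩
      have := col_strictMono hc s hsv u hu hsu
      omega
    · intro i hsub
      have hx : x ∈ s := singleton_subset_iff.mp hcx.2.2.1.subset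
      have hy : y ∈ s := singleton_subset_iff.mp hcy.2.2.1.subset
      have h1 := (mem_filter.mp (hsub hx)).2
      have h2 := (mem_filter.mp (hsub hy)).2
      exact hne (h1.trans h2.symm)

end Surj2


section Statements

variable {R : Type*} {A : Type*} [CommRing R] [AddCommGroup A] [Module R A]
variable {ι : Type*} [Fintype ι] [DecidableEq ι] {n : ℕ}

theorem stmt10 (T : TwoMulAlg R A) (k : Multiset A → A) (hk : IsCumulant T k)
    (part : ι → Fin n) (a : ι → A) :
    ∃ Φ : List (Finpartition (Finset.univ : Finset ι)) →
        Finset (Finset ι) × ((Finset ι → ℕ) × ℕ),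
      Set.BijOn Φ (UpSeqSet Finset.univ part)
        {q : Finset (Finset ι) × ((Finset ι → ℕ) × ℕ) |
          IsReducedForest Finset.univ q.1 ∧
          q.2 ∈ ColouringSet Finset.univ q.1 part ∧ 1 ≤ q.2.2} ∧
      ∀ ω ∈ UpSeqSet Finset.univ part,
        kappaUpSeq T k a ω = kappaForest T k Finset.univ (Φ ω).1 a ∧
        ω.length = (Φ ω).2.2 := by
  classical
  refine ⟨fun ω => (Fof ω, (cof ω, ω.length)), ⟨?_, ?_, ?_⟩, ?_⟩
  · -- MapsTo
    intro ω hω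
    refine ⟨isReducedForest_Fof hω, ⟨gapFree_cof hω, weaklyMixing_cof hω⟩, ?_⟩
    exact List.length_pos_iff.mpr hω.1
  · -- InjOn
    intro ω hω ω' hω' heq
    have hF : Fof ω = Fof ω' := congrArg Prod.fst heq
    have hc : cof ω = cof ω' := congrArg (Prod.fst ∘ Prod.snd) heq
    have hlen : ω.length = ω'.length := congrArg (Prod.snd ∘ Prod.snd) heq
    refine List.ext_getElem hlen fun i hi hi' => ?_
    apply Finpartition.ext
    ext s
    rw [block_iff hω hi, block_iff hω' hi', hF, hc]
  · -- SurjOn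
    rintro ⟨F, c, r⟩ ⟨hRF, ⟨hgf, hwm⟩, hr⟩
    refine ⟨omOf F c hRF hgf, omOf_mem_UpSeqSet hRF hgf hwm hr, ?_⟩
    exact Prod.ext (Fof_omOf hRF hgf)
      (Prod.ext (cof_omOf hRF hgf) (omOf_length hRF hgf))
  · -- the cumulant and length conditions
    intro ω hω
    exact ⟨kappaUpSeq_eq_kappaForest T k hk.1 hω a, rfl⟩

end Statements
end

section
/- Let A_1,…,A_n be finite multisets and A = A_1 ∪ ⋯ ∪ A_n their indexed multiset union. For any reduced forest F with leaves in A which is NOT mixing for the division A = A_1 ∪ ⋯ ∪ A_n (i.e. some internal vertex all of whose children are leaves has all children labelled by elements of a single multiset A_i), one has Σ_{c ∈ C_F} (−1)^{|c|} = 0. -/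
open Finset

section Stmt11Aux

variable {ι : Type*} [Fintype ι] [DecidableEq ι] {n : ℕ}
variable {part : ι → Fin n} {F : Finset (Finset ι)} {s₀ : Finset ι}

/-- Shift colours: give `s₀` a fresh colour just above its old one. -/
private def upc (s₀ : Finset ι) (c : Finset ι → ℕ) : Finset ι → ℕ := fun v =>
  if v = s₀ then c s₀ + 1 else if c s₀ + 1 ≤ c v then c v + 1 else c v

/-- Shift colours: merge the colour of `s₀` down by one. -/
private def dnc (s₀ : Finset ι) (c : Finset ι → ℕ) : Finset ι → ℕ := fun v =>
  if v = s₀ then c s₀ - 1 else if c s₀ + 1 ≤ c v then c v - 1 else c v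

private lemma upc_self (s₀ : Finset ι) (c : Finset ι → ℕ) : upc s₀ c s₀ = c s₀ + 1 := by
  simp [upc]

private lemma dnc_self (s₀ : Finset ι) (c : Finset ι → ℕ) : dnc s₀ c s₀ = c s₀ - 1 := by
  simp [dnc]

open scoped Classical in
/-- The sign-reversing involution on colourings. -/
private noncomputable def phiC (F : Finset (Finset ι)) (s₀ : Finset ι)
    (p : (Finset ι → ℕ) × ℕ) : (Finset ι → ℕ) × ℕ :=
  if ∀ v ∈ forestVerts (Finset.univ : Finset ι) F, v ≠ s₀ → p.1 v ≠ p.1 s₀ then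
    (dnc s₀ p.1, p.2 - 1)
  else (upc s₀ p.1, p.2 + 1)

private lemma s0_mem_verts (hs₀ : s₀ ∈ F) : s₀ ∈ forestVerts Finset.univ F := by
  rw [forestVerts, Finset.mem_union]; exact Or.inl hs₀

private lemma singleton_mem_verts (x : ι) : ({x} : Finset ι) ∈ forestVerts Finset.univ F := by
  rw [forestVerts, Finset.mem_union]
  exact Or.inr (Finset.mem_image.mpr ⟨x, Finset.mem_univ x, rfl⟩)

private lemma singleton_ne_s0 (hF : IsReducedForest Finset.univ F) (hs₀ : s₀ ∈ F) (x : ι) :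
    ({x} : Finset ι) ≠ s₀ := by
  intro h
  have h2 := (hF.1 s₀ hs₀).2
  rw [← h, Finset.card_singleton] at h2
  omega

private lemma child_s0 (hF : IsReducedForest Finset.univ F) (hs₀ : s₀ ∈ F)
    (hchain : ∀ t ∈ F, ¬t ⊂ s₀) {x : ι} (hx : x ∈ s₀) : IsChildV Finset.univ F {x} s₀ := by
  refine ⟨singleton_mem_verts x, s0_mem_verts hs₀, ?_, ?_⟩
  · refine Finset.ssubset_iff_subset_ne.mpr ⟨Finset.singleton_subset_iff.mpr hx,
      singleton_ne_s0 hF hs₀ x⟩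
  · rintro u hu ⟨h1, h2⟩
    rw [forestVerts, Finset.mem_union] at hu
    rcases hu with h | h
    · exact hchain u h h2
    · obtain ⟨y, -, rfl⟩ := Finset.mem_image.mp h
      exact absurd (Finset.ssubset_singleton_iff.mp h1) (Finset.singleton_ne_empty x)

private lemma child_char (hchain : ∀ t ∈ F, ¬t ⊂ s₀) {t : Finset ι}
    (ht : IsChildV Finset.univ F t s₀) : ∃ x, x ∈ s₀ ∧ t = {x} := by
  obtain ⟨htV, -, hsub, -⟩ := ht
  rw [forestVerts, Finset.mem_union] at htV
  rcases htV with h | h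
  · exact absurd hsub (hchain t h)
  · obtain ⟨x, -, rfl⟩ := Finset.mem_image.mp h
    exact ⟨x, Finset.singleton_subset_iff.mp hsub.subset, rfl⟩

private lemma basics (hF : IsReducedForest Finset.univ F) (hs₀ : s₀ ∈ F)
    (hchain : ∀ t ∈ F, ¬t ⊂ s₀) (hmono : ∀ x ∈ s₀, ∀ y ∈ s₀, part x = part y)
    {p : (Finset ι → ℕ) × ℕ} (hp : p ∈ ColouringSet Finset.univ F part) :
    1 ≤ p.1 s₀ ∧ p.1 s₀ ≤ p.2 ∧
      ∃ w ∈ forestVerts Finset.univ F, p.1 w = 1 ∧ w ≠ s₀ ∧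
        ∃ x y : ι, IsChildV Finset.univ F {x} w ∧ IsChildV Finset.univ F {y} w ∧
          part x ≠ part y := by
  obtain ⟨⟨h1, h2, h3, h4, h5⟩, hw⟩ := hp
  have hcard := (hF.1 s₀ hs₀).2
  obtain ⟨x, hx⟩ := Finset.card_pos.mp (show 0 < s₀.card by omega)
  have hj1 : 1 ≤ p.1 s₀ := by
    have hlt := h4 _ _ (child_s0 hF hs₀ hchain hx)
    have h0 : p.1 {x} = 0 := h3 x (Finset.mem_univ x)
    omega
  have hjr : p.1 s₀ ≤ p.2 := h1 s₀ (s0_mem_verts hs₀)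
  obtain ⟨v, hvV, hv1⟩ := h2 1 (by omega)
  rcases hw with hw | ⟨w, hwV, hw1, x', y', hx', hy', hne⟩
  · exact absurd hv1 (hw v hvV)
  · refine ⟨hj1, hjr, w, hwV, hw1, ?_, x', y', hx', hy', hne⟩
    rintro rfl
    exact hne (hmono x' (Finset.singleton_subset_iff.mp hx'.2.2.1.subset) y'
      (Finset.singleton_subset_iff.mp hy'.2.2.1.subset))

private lemma up_mem (hF : IsReducedForest Finset.univ F) (hs₀ : s₀ ∈ F)
    (hchain : ∀ t ∈ F, ¬t ⊂ s₀) (hmono : ∀ x ∈ s₀, ∀ y ∈ s₀, part x = part y)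
    {p : (Finset ι → ℕ) × ℕ} (hp : p ∈ ColouringSet Finset.univ F part)
    (hsh : ∃ u ∈ forestVerts Finset.univ F, u ≠ s₀ ∧ p.1 u = p.1 s₀) :
    (upc s₀ p.1, p.2 + 1) ∈ ColouringSet Finset.univ F part := by
  obtain ⟨hj1, hjr, w, hwV, hw1, hws, x, y, hx, hy, hne⟩ := basics hF hs₀ hchain hmono hp
  obtain ⟨⟨h1, h2, h3, h4, h5⟩, -⟩ := hp
  refine ⟨⟨?_, ?_, ?_, ?_, ?_⟩, ?_⟩
  · intro v hv
    have := h1 v hv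
    simp only [upc]
    split_ifs <;> omega
  · intro i hi
    by_cases hij : i = p.1 s₀ + 1
    · exact ⟨s₀, s0_mem_verts hs₀, by simp [upc, hij]⟩
    · by_cases hle : i ≤ p.1 s₀
      · obtain ⟨v, hv, hvi⟩ := h2 i (le_trans hle hjr)
        by_cases hvs : v = s₀
        · obtain ⟨u, huV, hus, huj⟩ := hsh
          refine ⟨u, huV, ?_⟩
          simp only [upc, if_neg hus]
          rw [huj, if_neg (by omega)]
          rw [hvs] at hvi; omega
        · refine ⟨v, hv, ?_⟩
          simp only [upc, if_neg hvs]
          rw [hvi, if_neg (by omega)]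
      · obtain ⟨v, hv, hvi⟩ := h2 (i - 1) (by omega)
        have hvs : v ≠ s₀ := by intro e; rw [e] at hvi; omega
        refine ⟨v, hv, ?_⟩
        simp only [upc, if_neg hvs]
        rw [hvi, if_pos (by omega)]
        omega
  · intro z hz
    simp only [upc, if_neg (singleton_ne_s0 hF hs₀ z)]
    rw [h3 z hz, if_neg (by omega)]
  · intro t s hts
    have hct := h4 t s hts
    by_cases hts₀ : t = s₀
    · by_cases hss₀ : s = s₀
      · rw [hts₀, hss₀] at hct; omega
      · rw [hts₀] at hct
        simp only [upc, if_pos hts₀, if_neg hss₀]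
        split_ifs <;> omega
    · by_cases hss₀ : s = s₀
      · obtain ⟨z, hz, rfl⟩ := child_char hchain (hss₀ ▸ hts)
        simp only [upc, if_neg hts₀, if_pos hss₀]
        rw [h3 z (Finset.mem_univ z), if_neg (by omega)]
        omega
      · simp only [upc, if_neg hts₀, if_neg hss₀]
        split_ifs <;> omega
  · intro s hs
    have hne' : s ≠ s₀ := fun e => hs (e ▸ s0_mem_verts hs₀)
    simp only [upc, if_neg hne']
    rw [h5 s hs, if_neg (by omega)]
  · right
    refine ⟨w, hwV, ?_, x, y, hx, hy, hne⟩
    simp only [upc, if_neg hws]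
    rw [hw1, if_neg (by omega)]

private lemma dn_mem (hF : IsReducedForest Finset.univ F) (hs₀ : s₀ ∈ F)
    (hchain : ∀ t ∈ F, ¬t ⊂ s₀) (hmono : ∀ x ∈ s₀, ∀ y ∈ s₀, part x = part y)
    {p : (Finset ι → ℕ) × ℕ} (hp : p ∈ ColouringSet Finset.univ F part)
    (hal : ∀ v ∈ forestVerts Finset.univ F, v ≠ s₀ → p.1 v ≠ p.1 s₀) :
    (dnc s₀ p.1, p.2 - 1) ∈ ColouringSet Finset.univ F part := by
  obtain ⟨hj1, hjr, w, hwV, hw1, hws, x, y, hx, hy, hne⟩ := basics hF hs₀ hchain hmono hp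
  obtain ⟨⟨h1, h2, h3, h4, h5⟩, -⟩ := hp
  have hj2 : 2 ≤ p.1 s₀ := by
    have := hal w hwV hws
    omega
  refine ⟨⟨?_, ?_, ?_, ?_, ?_⟩, ?_⟩
  · intro v hv
    have := h1 v hv
    simp only [dnc]
    split_ifs with e1 e2
    · omega
    · omega
    · have := hal v hv e1; omega
  · intro i hi
    by_cases hij : i = p.1 s₀ - 1
    · exact ⟨s₀, s0_mem_verts hs₀, by simp [dnc, hij]⟩
    · by_cases hle : i < p.1 s₀
      · obtain ⟨v, hv, hvi⟩ := h2 i (by omega)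
        have hvs : v ≠ s₀ := by intro e; rw [e] at hvi; omega
        refine ⟨v, hv, ?_⟩
        simp only [dnc, if_neg hvs]
        rw [hvi, if_neg (by omega)]
      · obtain ⟨v, hv, hvi⟩ := h2 (i + 1) (by omega)
        have hvs : v ≠ s₀ := by intro e; rw [e] at hvi; omega
        refine ⟨v, hv, ?_⟩
        simp only [dnc, if_neg hvs]
        rw [hvi, if_pos (by omega)]
        omega
  · intro z hz
    simp only [dnc, if_neg (singleton_ne_s0 hF hs₀ z)]
    rw [h3 z hz, if_neg (by omega)]
  · intro t s hts
    have hct := h4 t s hts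
    have htV := hts.1
    have hsV := hts.2.1
    by_cases hts₀ : t = s₀
    · by_cases hss₀ : s = s₀
      · rw [hts₀, hss₀] at hct; omega
      · have hcs := hal s hsV hss₀
        rw [hts₀] at hct
        simp only [dnc, if_pos hts₀, if_neg hss₀]
        split_ifs <;> omega
    · by_cases hss₀ : s = s₀
      · obtain ⟨z, hz, rfl⟩ := child_char hchain (hss₀ ▸ hts)
        simp only [dnc, if_neg hts₀, if_pos hss₀]
        rw [h3 z (Finset.mem_univ z), if_neg (by omega)]
        omega
      · have hcs := hal s hsV hss₀
        have hctne := hal t htV hts₀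
        simp only [dnc, if_neg hts₀, if_neg hss₀]
        split_ifs <;> omega
  · intro s hs
    have hne' : s ≠ s₀ := fun e => hs (e ▸ s0_mem_verts hs₀)
    simp only [dnc, if_neg hne']
    rw [h5 s hs, if_neg (by omega)]
  · right
    refine ⟨w, hwV, ?_, x, y, hx, hy, hne⟩
    simp only [dnc, if_neg hws]
    rw [hw1, if_neg (by omega)]

private lemma phi_mem (hF : IsReducedForest Finset.univ F) (hs₀ : s₀ ∈ F)
    (hchain : ∀ t ∈ F, ¬t ⊂ s₀) (hmono : ∀ x ∈ s₀, ∀ y ∈ s₀, part x = part y)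
    {p : (Finset ι → ℕ) × ℕ} (hp : p ∈ ColouringSet Finset.univ F part) :
    phiC F s₀ p ∈ ColouringSet Finset.univ F part := by
  rw [phiC]
  split_ifs with hal
  · exact dn_mem hF hs₀ hchain hmono hp hal
  · push_neg at hal
    obtain ⟨u, huV, hus, huj⟩ := hal
    exact up_mem hF hs₀ hchain hmono hp ⟨u, huV, hus, huj⟩

private lemma phi_inv (hF : IsReducedForest Finset.univ F) (hs₀ : s₀ ∈ F)
    (hchain : ∀ t ∈ F, ¬t ⊂ s₀) (hmono : ∀ x ∈ s₀, ∀ y ∈ s₀, part x = part y)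
    {p : (Finset ι → ℕ) × ℕ} (hp : p ∈ ColouringSet Finset.univ F part) :
    phiC F s₀ (phiC F s₀ p) = p := by
  obtain ⟨hj1, hjr, w, hwV, hw1, hws, -⟩ := basics hF hs₀ hchain hmono hp
  obtain ⟨⟨h1, h2, h3, h4, h5⟩, -⟩ := hp
  have hq0d : (dnc s₀ p.1) s₀ = p.1 s₀ - 1 := by simp [dnc]
  have hq0u : (upc s₀ p.1) s₀ = p.1 s₀ + 1 := by simp [upc]
  by_cases hal : ∀ v ∈ forestVerts (Finset.univ : Finset ι) F, v ≠ s₀ → p.1 v ≠ p.1 s₀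
  · have hj2 : 2 ≤ p.1 s₀ := by
      have := hal w hwV hws
      omega
    have hstep : phiC F s₀ p = (dnc s₀ p.1, p.2 - 1) := by rw [phiC, if_pos hal]
    rw [hstep, phiC]
    have hnal : ¬∀ v ∈ forestVerts (Finset.univ : Finset ι) F, v ≠ s₀ →
        (dnc s₀ p.1, p.2 - 1).1 v ≠ (dnc s₀ p.1, p.2 - 1).1 s₀ := by
      push_neg
      obtain ⟨v, hv, hvj⟩ := h2 (p.1 s₀ - 1) (by omega)
      have hvs : v ≠ s₀ := by intro e; rw [e] at hvj; omega
      refine ⟨v, hv, hvs, ?_⟩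
      show dnc s₀ p.1 v = dnc s₀ p.1 s₀
      rw [hq0d]
      simp only [dnc, if_neg hvs]
      rw [hvj, if_neg (by omega)]
    rw [if_neg hnal]
    refine Prod.ext ?_ (by show p.2 - 1 + 1 = p.2; omega)
    show upc s₀ (dnc s₀ p.1) = p.1
    funext v
    by_cases hvs : v = s₀
    · rw [hvs, upc_self, dnc_self]
      omega
    · have hor : p.1 v ≠ p.1 s₀ ∨ p.1 v = 0 := by
        by_cases hvV : v ∈ forestVerts Finset.univ F
        · exact Or.inl (hal v hvV hvs)
        · exact Or.inr (h5 v hvV)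
      simp only [upc, dnc, if_neg hvs, if_pos rfl]
      split_ifs <;> omega
  · have hstep : phiC F s₀ p = (upc s₀ p.1, p.2 + 1) := by rw [phiC, if_neg hal]
    rw [hstep, phiC]
    have hal' : ∀ v ∈ forestVerts (Finset.univ : Finset ι) F, v ≠ s₀ →
        (upc s₀ p.1, p.2 + 1).1 v ≠ (upc s₀ p.1, p.2 + 1).1 s₀ := by
      intro v hv hvs
      show upc s₀ p.1 v ≠ upc s₀ p.1 s₀
      rw [hq0u]
      simp only [upc, if_neg hvs]
      split_ifs <;> omega
    rw [if_pos hal']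
    refine Prod.ext ?_ (by show p.2 + 1 - 1 = p.2; omega)
    show dnc s₀ (upc s₀ p.1) = p.1
    funext v
    by_cases hvs : v = s₀
    · rw [hvs, dnc_self, upc_self]
      omega
    · simp only [dnc, upc, if_neg hvs, if_pos rfl]
      split_ifs <;> omega

private lemma phi_snd (hF : IsReducedForest Finset.univ F) (hs₀ : s₀ ∈ F)
    (hchain : ∀ t ∈ F, ¬t ⊂ s₀) (hmono : ∀ x ∈ s₀, ∀ y ∈ s₀, part x = part y)
    {p : (Finset ι → ℕ) × ℕ} (hp : p ∈ ColouringSet Finset.univ F part) :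
    (phiC F s₀ p).2 + 1 = p.2 ∨ (phiC F s₀ p).2 = p.2 + 1 := by
  obtain ⟨hj1, hjr, -⟩ := basics hF hs₀ hchain hmono hp
  rw [phiC]
  split_ifs
  · left; show p.2 - 1 + 1 = p.2; omega
  · right; rfl

end Stmt11Aux

section Statements

variable {R : Type*} {A : Type*} [CommRing R] [AddCommGroup A] [Module R A]
variable {ι : Type*} [Fintype ι] [DecidableEq ι] {n : ℕ}

theorem stmt11 {ι : Type*} [Fintype ι] [DecidableEq ι] {n : ℕ} (part : ι → Fin n)
    (F : Finset (Finset ι)) (hF : IsReducedForest Finset.univ F)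
    (hnot : ¬IsMixingForest Finset.univ F part) :
    colourSum Finset.univ F part = 0 := by
  classical
  rw [IsMixingForest] at hnot
  push_neg at hnot
  obtain ⟨s₀, hs₀, hchain, hmono⟩ := hnot
  -- finiteness of the colouring set
  set N := (forestVerts (Finset.univ : Finset ι) F).card with hN
  have hfin : (ColouringSet (Finset.univ : Finset ι) F part).Finite := by
    apply Set.Finite.subset
      (Set.Finite.prod (Set.Finite.pi fun _ : Finset ι => Set.finite_Iic N) (Set.finite_Iic N))
    rintro ⟨c, r⟩ ⟨⟨h1, h2, h3, h4, h5⟩, -⟩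
    dsimp only at h1 h2 h3 h4 h5 ⊢
    have hsub : Finset.range (r + 1) ⊆ (forestVerts (Finset.univ : Finset ι) F).image c := by
      intro i hi
      rw [Finset.mem_range] at hi
      obtain ⟨v, hv, hvi⟩ := h2 i (by omega)
      exact Finset.mem_image.mpr ⟨v, hv, hvi⟩
    have hrN : r + 1 ≤ N := by
      calc r + 1 = (Finset.range (r + 1)).card := (Finset.card_range _).symm
        _ ≤ ((forestVerts (Finset.univ : Finset ι) F).image c).card := Finset.card_le_card hsub
        _ ≤ N := Finset.card_image_le
    constructor
    · intro v _
      show c v ≤ N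
      by_cases hv : v ∈ forestVerts (Finset.univ : Finset ι) F
      · have := h1 v hv
        omega
      · have := h5 v hv
        omega
    · show r ≤ N
      omega
  rw [colourSum, finsum_mem_eq_finite_toFinset_sum _ hfin]
  refine Finset.sum_involution (fun p _ => phiC F s₀ p) ?_ ?_ ?_ ?_
  · intro p hpm
    have hp : p ∈ ColouringSet Finset.univ F part := hfin.mem_toFinset.mp hpm
    rcases phi_snd hF hs₀ hchain hmono hp with h | h
    · rw [← h, pow_succ]; ring
    · rw [h, pow_succ]; ring
  · intro p hpm _
    have hp : p ∈ ColouringSet Finset.univ F part := hfin.mem_toFinset.mp hpm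
    intro he
    replace he : phiC F s₀ p = p := he
    rcases phi_snd hF hs₀ hchain hmono hp with h | h
    · rw [he] at h; omega
    · rw [he] at h; omega
  · intro p hpm
    have hp : p ∈ ColouringSet Finset.univ F part := hfin.mem_toFinset.mp hpm
    exact hfin.mem_toFinset.mpr (phi_mem hF hs₀ hchain hmono hp)
  · intro p hpm
    have hp : p ∈ ColouringSet Finset.univ F part := hfin.mem_toFinset.mp hpm
    exact phi_inv hF hs₀ hchain hmono hp

end Statements
end
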